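/- arXiv:math/0607790 — 5 statements merged into one kernel-verified Lean document; each statement's English description precedes it below -/
import Mathlib

section
/- Let n ≥ 3 and let g ∈ S_n. Suppose there exists a complete map P of order n such that g*∘P∘(g*)⁻¹ = P. Then the quantity lcm(l^g(i), l^g(j)) is the same for all pairs of distinct vertices: for any i ≠ j and k ≠ l in Fin n, lcm(l^g(i), l^g(j)) = lcm(l^g(k), l^g(l)). -/
/-- The quadricells of the complete graph `K_n`: pairs `((i,j),ε)` with `i ≠ j`. -/
abbrev Quadricells (n : ℕ) := {x : (Fin n × Fin n) × Bool // x.1.1 ≠ x.1.2}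

/-- Negation as a permutation of `Bool`. -/
def boolNeg : Equiv.Perm Bool :=
  ⟨Bool.not, Bool.not, fun b => by cases b <;> rfl, fun b => by cases b <;> rfl⟩

/-- The involution `α ((i,j),ε) = ((i,j), ¬ε)`. -/
def mapAlpha (n : ℕ) : Equiv.Perm (Quadricells n) :=
  Equiv.Perm.subtypePerm (Equiv.prodCongr (Equiv.refl (Fin n × Fin n)) boolNeg)
    (fun _ => Iff.rfl)

/-- The involution `β ((i,j),ε) = ((j,i), ε)`. -/
def mapBeta (n : ℕ) : Equiv.Perm (Quadricells n) :=
  Equiv.Perm.subtypePerm (Equiv.prodCongr (Equiv.prodComm (Fin n) (Fin n)) (Equiv.refl Bool))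
    (fun _ => ne_comm)

/-- The extended action of `g ∈ S_n` on quadricells: `g* ((i,j),ε) = ((g i, g j), ε)`. -/
def gStar {n : ℕ} (g : Equiv.Perm (Fin n)) : Equiv.Perm (Quadricells n) :=
  Equiv.Perm.subtypePerm (Equiv.prodCongr (Equiv.prodCongr g g) (Equiv.refl Bool))
    (fun _ => g.injective.ne_iff)

/-- The cardinality of the `⟨P⟩`-orbit of `x`. -/
noncomputable def orbLen {X : Type*} (P : Equiv.Perm X) (x : X) : ℕ :=
  Set.ncard {y | ∃ m : ℤ, (P ^ m) x = y}

/-- A complete map of order `n`. -/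
def IsCompleteMap {n : ℕ} (P : Equiv.Perm (Quadricells n)) : Prop :=
  (∀ x : Quadricells n, ((P x : (Fin n × Fin n) × Bool)).1.1 = (x : (Fin n × Fin n) × Bool).1.1) ∧
  mapAlpha n * P * mapAlpha n = P⁻¹ ∧
  (∀ (x : Quadricells n) (m : ℤ), (P ^ m) x ≠ mapAlpha n x) ∧
  (∀ x : Quadricells n, orbLen P x = n - 1)

/-- A complete map is non-orientable when `⟨αβ, P⟩` is transitive on the quadricells. -/
def NonOrientable {n : ℕ} (P : Equiv.Perm (Quadricells n)) : Prop :=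
  ∀ x y : Quadricells n, ∃ σ ∈ Subgroup.closure {mapAlpha n * mapBeta n, P}, σ x = y

/-- `τ` is an automorphism of the map `P`. -/
def IsMapAut {n : ℕ} (P τ : Equiv.Perm (Quadricells n)) : Prop :=
  τ * mapAlpha n = mapAlpha n * τ ∧ τ * mapBeta n = mapBeta n * τ ∧ τ * P * τ⁻¹ = P

/-- Isomorphism of maps on the quadricells of `K_n`. -/
def MapIso {n : ℕ} (P Q : Equiv.Perm (Quadricells n)) : Prop :=
  ∃ τ : Equiv.Perm (Quadricells n),
    τ * mapAlpha n = mapAlpha n * τ ∧ τ * mapBeta n = mapBeta n * τ ∧ τ * P * τ⁻¹ = Q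

/-- The setoid of maps (restricted by a property `Q`) under map isomorphism. -/
def mapSetoid (n : ℕ) (Q : Equiv.Perm (Quadricells n) → Prop) :
    Setoid {P : Equiv.Perm (Quadricells n) // Q P} where
  r P₁ P₂ := MapIso P₁.val P₂.val
  iseqv := by
    constructor
    · intro P
      exact ⟨1, by simp, by simp, by simp⟩
    · rintro P Q ⟨τ, h1, h2, h3⟩
      refine ⟨τ⁻¹, (Commute.inv_left h1 : _), (Commute.inv_left h2 : _), ?_⟩
      rw [← h3]; group
    · rintro P Q R ⟨τ, h1, h2, h3⟩ ⟨σ, g1, g2, g3⟩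
      refine ⟨σ * τ, (Commute.mul_left g1 h1 : _), (Commute.mul_left g2 h2 : _), ?_⟩
      rw [← g3, ← h3]; group

/-! A power of `g` fixing a quadricell `x = ((i,j),ε)` under `g*` fixes the whole
`⟨P⟩`-orbit of `x`, since `g*` commutes with `P`. By conditions (i), (iii) and (iv) the second
vertices of that orbit are all `n - 1` vertices other than `i`, so that power of `g` is the
identity. Hence the period `lcm (l^g(i), l^g(j))` of `x` under `g*` is the order of `g`,
whatever `i ≠ j` are. -/

lemma orbLen_eq_minimalPeriod {X : Type*} [Finite X] (f : Equiv.Perm X) (x : X) :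
    orbLen f x = Function.minimalPeriod f x := by
  have horbit : {y | ∃ m : ℤ, (f ^ m) x = y} = MulAction.orbit (Subgroup.zpowers f) x := by
    ext y
    simp only [Set.mem_ofPred_eq, MulAction.mem_orbit_iff, Subtype.exists,
      Subgroup.mem_zpowers_iff, exists_prop, exists_exists_eq_and, Subgroup.mk_smul,
      Equiv.Perm.smul_def]
  have := Fintype.ofFinite (MulAction.orbit (Subgroup.zpowers f) x)
  rw [orbLen, horbit, Set.ncard_eq_toFinset_card', Set.toFinset_card]
  exact (MulAction.minimalPeriod_eq_card _ _).symm

lemma Equiv.Perm.pow_apply_eq_self_iff {X : Type*} (f : Equiv.Perm X) (x : X) (k : ℕ) :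
    (f ^ k) x = x ↔ Function.minimalPeriod f x ∣ k := by
  rw [← Function.isPeriodicPt_iff_minimalPeriod_dvd, Function.IsPeriodicPt, Function.IsFixedPt,
    ← Equiv.Perm.coe_pow]

lemma Equiv.Perm.apply_zpow_apply_eq {X Y : Type*} {P : Equiv.Perm X} {f : X → Y}
    (h : ∀ x, f (P x) = f x) (m : ℤ) (x : X) : f ((P ^ m) x) = f x := by
  have hinv : ∀ x, f (P⁻¹ x) = f x := fun x => by simpa using (h (P⁻¹ x)).symm
  induction m using Int.induction_on generalizing x with
  | zero => rfl
  | succ k ih => rw [zpow_add_one, Equiv.Perm.mul_apply, ih, h]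
  | pred k ih => rw [zpow_sub_one, Equiv.Perm.mul_apply, ih, hinv]

lemma gStar_mul {n : ℕ} (g h : Equiv.Perm (Fin n)) : gStar (g * h) = gStar g * gStar h := rfl

lemma gStar_pow {n : ℕ} (g : Equiv.Perm (Fin n)) (k : ℕ) : gStar (g ^ k) = gStar g ^ k := by
  induction k with
  | zero => rfl
  | succ k ih => rw [pow_succ, gStar_mul, ih, pow_succ]

lemma gStar_apply_eq_self_iff {n : ℕ} (g : Equiv.Perm (Fin n)) (x : Quadricells n) :
    gStar g x = x ↔ g x.1.1.1 = x.1.1.1 ∧ g x.1.1.2 = x.1.1.2 := by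
  simp [gStar, Subtype.ext_iff, Prod.ext_iff]

lemma Quadricells.eq_or_eq_mapAlpha {n : ℕ} {x y : Quadricells n} (h : x.1.1 = y.1.1) :
    y = x ∨ y = mapAlpha n x := by
  obtain ⟨⟨p, a⟩, hp⟩ := x
  obtain ⟨⟨q, b⟩, hq⟩ := y
  cases h
  cases a <;> cases b <;> simp [mapAlpha, boolNeg]

namespace IsCompleteMap

variable {n : ℕ} {P : Equiv.Perm (Quadricells n)}

lemma fst_zpow_apply (hP : IsCompleteMap P) (m : ℤ) (x : Quadricells n) :
    ((P ^ m) x).1.1.1 = x.1.1.1 :=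
  Equiv.Perm.apply_zpow_apply_eq (f := fun y : Quadricells n => y.1.1.1) hP.1 m x

lemma injOn_snd_orbit (hP : IsCompleteMap P) (x : Quadricells n) :
    Set.InjOn (fun y : Quadricells n => y.1.1.2) {y | ∃ m : ℤ, (P ^ m) x = y} := by
  rintro _ ⟨a, rfl⟩ _ ⟨b, rfl⟩ hab
  have hpair : ((P ^ a) x).1.1 = ((P ^ b) x).1.1 :=
    Prod.ext (by rw [hP.fst_zpow_apply, hP.fst_zpow_apply]) hab
  obtain h | h := Quadricells.eq_or_eq_mapAlpha hpair
  · exact h.symm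
  · refine absurd ?_ (hP.2.2.1 ((P ^ a) x) (b - a))
    rw [← h, ← Equiv.Perm.mul_apply, ← zpow_add, sub_add_cancel]

lemma image_snd_orbit (hP : IsCompleteMap P) (x : Quadricells n) :
    (fun y : Quadricells n => y.1.1.2) '' {y | ∃ m : ℤ, (P ^ m) x = y} =
      {v | v ≠ x.1.1.1} := by
  refine Set.eq_of_subset_of_ncard_le ?_ ?_ (Set.toFinite _)
  · rintro _ ⟨_, ⟨m, rfl⟩, rfl⟩
    rw [Set.mem_ofPred_eq, ← hP.fst_zpow_apply m x]
    exact ((P ^ m) x).2.symm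
  · rw [(hP.injOn_snd_orbit x).ncard_image, ← orbLen, hP.2.2.2 x, ← Set.compl_singleton_eq,
      Set.ncard_compl, Set.ncard_singleton, Nat.card_eq_fintype_card, Fintype.card_fin]

lemma eq_one_of_commute_gStar (hP : IsCompleteMap P) {h : Equiv.Perm (Fin n)}
    (hc : Commute (gStar h) P) {x : Quadricells n} (hx : gStar h x = x) : h = 1 := by
  refine Equiv.ext fun v => ?_
  obtain rfl | hv := eq_or_ne v x.1.1.1
  · exact ((gStar_apply_eq_self_iff h x).1 hx).1
  obtain ⟨_, ⟨m, rfl⟩, rfl⟩ := (hP.image_snd_orbit x).symm.subset hv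
  have hfix : gStar h ((P ^ m) x) = (P ^ m) x := by
    rw [← Equiv.Perm.mul_apply, (hc.zpow_right m).eq, Equiv.Perm.mul_apply, hx]
  exact ((gStar_apply_eq_self_iff h _).1 hfix).2

lemma lcm_orbLen_eq_orderOf (hP : IsCompleteMap P) {g : Equiv.Perm (Fin n)}
    (hc : Commute (gStar g) P) {i j : Fin n} (hij : i ≠ j) :
    Nat.lcm (orbLen g i) (orbLen g j) = orderOf g := by
  rw [orbLen_eq_minimalPeriod, orbLen_eq_minimalPeriod]
  apply Nat.dvd_antisymm
  · have hperiod (v : Fin n) : Function.minimalPeriod g v ∣ orderOf g :=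
      (g.pow_apply_eq_self_iff v _).1 (by rw [pow_orderOf_eq_one]; rfl)
    exact Nat.lcm_dvd (hperiod i) (hperiod j)
  · refine orderOf_dvd_of_pow_eq_one (hP.eq_one_of_commute_gStar (x := ⟨((i, j), true), hij⟩)
      (by rw [gStar_pow]; exact hc.pow_left _) ?_)
    rw [gStar_apply_eq_self_iff]
    exact ⟨(g.pow_apply_eq_self_iff i _).2 (Nat.dvd_lcm_left _ _),
      (g.pow_apply_eq_self_iff j _).2 (Nat.dvd_lcm_right _ _)⟩

end IsCompleteMap

theorem complete_map_aut_lcm_const_general (n : ℕ) (g : Equiv.Perm (Fin n))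
    (h : ∃ P : Equiv.Perm (Quadricells n), IsCompleteMap P ∧ gStar g * P * (gStar g)⁻¹ = P) :
    ∀ i j k l : Fin n, i ≠ j → k ≠ l →
      Nat.lcm (orbLen g i) (orbLen g j) = Nat.lcm (orbLen g k) (orbLen g l) := by
  obtain ⟨P, hP, hconj⟩ := h
  have hc : Commute (gStar g) P := mul_inv_eq_iff_eq_mul.mp hconj
  intro i j k l hij hkl
  rw [hP.lcm_orbLen_eq_orderOf hc hij, hP.lcm_orbLen_eq_orderOf hc hkl]

/-- If `g ∈ S_n` stabilizes some complete map of order `n ≥ 3`, then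
`lcm(l^g(i), l^g(j))` is the same for all pairs of distinct vertices. -/
theorem complete_map_aut_lcm_const (n : ℕ) (hn : 3 ≤ n) (g : Equiv.Perm (Fin n))
    (h : ∃ P : Equiv.Perm (Quadricells n), IsCompleteMap P ∧ gStar g * P * (gStar g)⁻¹ = P) :
    ∀ i j k l : Fin n, i ≠ j → k ≠ l →
      Nat.lcm (orbLen g i) (orbLen g j) = Nat.lcm (orbLen g k) (orbLen g l) :=
  complete_map_aut_lcm_const_general n g h
end

section
/- Let n ≥ 4 and let g ∈ S_n. If there exists a complete map P of order n such that g*∘P∘(g*)⁻¹ = P, then there is a positive integer s such that either (a) every ⟨g⟩-orbit on Fin n has length s (so s divides n and g has cycle type [s^{n/s}]), or (b) g has exactly one fixed point and every other ⟨g⟩-orbit on Fin n has length s (so s divides n−1 and g has cycle type [1, s^{(n−1)/s}]). -/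
namespace CMAux
lemma orbLen_eq_minimalPeriod {X : Type*} [Finite X] (P : Equiv.Perm X) (x : X) :
    orbLen P x = Function.minimalPeriod P x := by
  have hN : 0 < orderOf P := orderOf_pos P
  have hper : Function.IsPeriodicPt P (orderOf P) x := by
    show P^[orderOf P] x = x
    rw [Equiv.Perm.iterate_eq_pow, pow_orderOf_eq_one]; rfl
  have hl : 0 < Function.minimalPeriod (⇑P) x := hper.minimalPeriod_pos hN
  have hset : {y | ∃ m : ℤ, (P ^ m) x = y}
      = (fun k => (⇑P)^[k] x) '' Set.Iio (Function.minimalPeriod (⇑P) x) := by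
    ext y
    constructor
    · rintro ⟨m, rfl⟩
      have hle : (0:ℤ) ≤ m % (orderOf P : ℤ) :=
        Int.emod_nonneg m (by exact_mod_cast hN.ne')
      have h1 : (P : Equiv.Perm X) ^ m = P ^ ((m % (orderOf P : ℤ)).toNat) := by
        rw [← zpow_natCast, Int.toNat_of_nonneg hle, zpow_mod_orderOf]
      refine ⟨(m % (orderOf P : ℤ)).toNat % Function.minimalPeriod (⇑P) x,
        Nat.mod_lt _ hl, ?_⟩
      show (⇑P)^[(m % (orderOf P : ℤ)).toNat % Function.minimalPeriod (⇑P) x] x = _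
      rw [Function.iterate_mod_minimalPeriod_eq, Equiv.Perm.iterate_eq_pow, ← h1]
    · rintro ⟨k, _, rfl⟩
      exact ⟨(k : ℤ), by rw [zpow_natCast, ← Equiv.Perm.iterate_eq_pow]⟩
  have hinj : Set.InjOn (fun k => (⇑P)^[k] x) (Set.Iio (Function.minimalPeriod (⇑P) x)) :=
    Function.iterate_injOn_Iio_minimalPeriod
  rw [orbLen, hset, Set.ncard_image_of_injOn hinj]
  have : (Set.Iio (Function.minimalPeriod (⇑P) x) : Set ℕ)
      = ↑(Finset.range (Function.minimalPeriod (⇑P) x)) := by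
    ext k; simp
  rw [this, Set.ncard_coe_finset, Finset.card_range]

variable {n : ℕ}

lemma pow_orbLen_apply (g : Equiv.Perm (Fin n)) (i : Fin n) : (g ^ orbLen g i) i = i := by
  rw [orbLen_eq_minimalPeriod]
  have := Function.isPeriodicPt_minimalPeriod (⇑g) i
  rwa [Function.IsPeriodicPt, Function.IsFixedPt, Equiv.Perm.iterate_eq_pow] at this

lemma orbLen_dvd_orderOf (g : Equiv.Perm (Fin n)) (i : Fin n) : orbLen g i ∣ orderOf g := by
  rw [orbLen_eq_minimalPeriod]
  apply Function.IsPeriodicPt.minimalPeriod_dvd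
  show (⇑g)^[orderOf g] i = i
  rw [Equiv.Perm.iterate_eq_pow, pow_orderOf_eq_one]; rfl

lemma orbLen_eq_one_iff (g : Equiv.Perm (Fin n)) (i : Fin n) : orbLen g i = 1 ↔ g i = i := by
  rw [orbLen_eq_minimalPeriod, Function.minimalPeriod_eq_one_iff_isFixedPt]
  exact Iff.rfl

variable {n : ℕ}
variable {n : ℕ}

lemma mapAlpha_coe (x : Quadricells n) :
    (mapAlpha n x : (Fin n × Fin n) × Bool) = (x.val.1, !x.val.2) := rfl

lemma mapBeta_coe (x : Quadricells n) :
    (mapBeta n x : (Fin n × Fin n) × Bool) = ((x.val.1.2, x.val.1.1), x.val.2) := rfl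

lemma gStar_coe (g : Equiv.Perm (Fin n)) (x : Quadricells n) :
    (gStar g x : (Fin n × Fin n) × Bool) = ((g x.val.1.1, g x.val.1.2), x.val.2) := rfl

lemma gStar_mul (g h : Equiv.Perm (Fin n)) : gStar (g * h) = gStar g * gStar h :=
  Equiv.ext fun x => rfl

lemma gStar_one : gStar (1 : Equiv.Perm (Fin n)) = 1 :=
  Equiv.ext fun x => rfl

lemma gStar_alpha (g : Equiv.Perm (Fin n)) : gStar g * mapAlpha n = mapAlpha n * gStar g :=
  Equiv.ext fun x => rfl

lemma gStar_beta (g : Equiv.Perm (Fin n)) : gStar g * mapBeta n = mapBeta n * gStar g :=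
  Equiv.ext fun x => rfl

lemma alpha_mul_self : mapAlpha n * mapAlpha n = 1 :=
  Equiv.ext fun x => Subtype.ext (Prod.ext rfl (Bool.not_not _))

lemma gStar_pow (g : Equiv.Perm (Fin n)) (k : ℕ) : gStar (g ^ k) = gStar g ^ k := by
  induction k with
  | zero => simpa using gStar_one
  | succ k ih => rw [pow_succ, pow_succ, gStar_mul, ih]

end CMAux
namespace CMAux
variable {n : ℕ}

lemma zpow_fst {P : Equiv.Perm (Quadricells n)}
    (h1 : ∀ x : Quadricells n, (P x).val.1.1 = x.val.1.1) (m : ℤ) (x : Quadricells n) :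
    ((P ^ m) x).val.1.1 = x.val.1.1 := by
  have hinv : ∀ x : Quadricells n, (P⁻¹ x).val.1.1 = x.val.1.1 := by
    intro x
    have := h1 (P⁻¹ x)
    rw [show P (P⁻¹ x) = x from P.apply_symm_apply x] at this
    exact this.symm
  induction m using Int.induction_on generalizing x with
  | zero => simp
  | succ k ih =>
      have hstep : (P ^ ((k : ℤ) + 1)) x = (P ^ (k : ℤ)) (P x) := by
        rw [zpow_add_one]; rfl
      rw [hstep, ih (P x), h1 x]
  | pred k ih =>
      have hstep : (P ^ (-(k : ℤ) - 1)) x = (P ^ (-(k : ℤ))) (P⁻¹ x) := by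
        rw [zpow_sub_one]; rfl
      rw [hstep, ih (P⁻¹ x), hinv x]

lemma alpha_semiconj {P : Equiv.Perm (Quadricells n)}
    (h2 : mapAlpha n * P * mapAlpha n = P⁻¹) (m : ℤ) (x : Quadricells n) :
    mapAlpha n ((P ^ m) x) = (P ^ (-m)) (mapAlpha n x) := by
  have hsemi : SemiconjBy (mapAlpha n) P P⁻¹ := by
    show mapAlpha n * P = P⁻¹ * mapAlpha n
    calc mapAlpha n * P = mapAlpha n * P * (mapAlpha n * mapAlpha n) := by
          rw [alpha_mul_self, mul_one]
      _ = P⁻¹ * mapAlpha n := by rw [← mul_assoc, h2]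
  have h := hsemi.zpow_right m
  have h' : mapAlpha n * P ^ m = P ^ (-m) * mapAlpha n := by
    have : (P⁻¹) ^ m = P ^ (-m) := by rw [inv_zpow, zpow_neg]
    rw [← this]; exact h
  calc mapAlpha n ((P ^ m) x) = (mapAlpha n * P ^ m) x := rfl
    _ = (P ^ (-m) * mapAlpha n) x := by rw [h']
    _ = (P ^ (-m)) (mapAlpha n x) := rfl

lemma orbit_ne_alpha {P : Equiv.Perm (Quadricells n)}
    (h3 : ∀ (x : Quadricells n) (m : ℤ), (P ^ m) x ≠ mapAlpha n x)
    (x : Quadricells n) (a b : ℤ) : (P ^ a) x ≠ mapAlpha n ((P ^ b) x) := by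
  intro hEq
  apply h3 ((P ^ b) x) (a - b)
  rw [← hEq, ← Equiv.Perm.mul_apply, ← zpow_add, show a - b + b = a by ring]

lemma orbit_injOn {P : Equiv.Perm (Quadricells n)} (hP : IsCompleteMap P) (x : Quadricells n) :
    Set.InjOn (fun y : Quadricells n => y.val.1.2) {y | ∃ m : ℤ, (P ^ m) x = y} := by
  rintro y ⟨a, rfl⟩ z ⟨b, rfl⟩ hyz
  have hy1 : ((P ^ a) x).val.1.1 = x.val.1.1 := zpow_fst hP.1 a x
  have hz1 : ((P ^ b) x).val.1.1 = x.val.1.1 := zpow_fst hP.1 b x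
  simp only at hyz
  by_cases hb : ((P ^ a) x).val.2 = ((P ^ b) x).val.2
  · exact Subtype.ext (Prod.ext (Prod.ext (hy1.trans hz1.symm) hyz) hb)
  · exfalso
    apply orbit_ne_alpha hP.2.2.1 x a b
    apply Subtype.ext
    rw [mapAlpha_coe]
    refine Prod.ext (Prod.ext (hy1.trans hz1.symm) hyz) ?_
    cases h1 : ((P ^ a) x).val.2 <;> cases h2 : ((P ^ b) x).val.2 <;> simp_all

lemma orbit_snd_surj {P : Equiv.Perm (Quadricells n)} (hP : IsCompleteMap P)
    (x : Quadricells n) (j : Fin n) (hj : j ≠ x.val.1.1) :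
    ∃ m : ℤ, ((P ^ m) x).val.1.2 = j := by
  classical
  have hcard : Set.ncard {y : Quadricells n | ∃ m : ℤ, (P ^ m) x = y} = n - 1 := hP.2.2.2 x
  have hsub : (fun y : Quadricells n => y.val.1.2) '' {y | ∃ m : ℤ, (P ^ m) x = y}
      ⊆ {k | k ≠ x.val.1.1} := by
    rintro _ ⟨y, ⟨m, rfl⟩, rfl⟩
    have h1 := zpow_fst hP.1 m x
    exact fun hc => ((P ^ m) x).2 (h1.trans hc.symm)
  have hTcard : Set.ncard {k : Fin n | k ≠ x.val.1.1} = n - 1 := by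
    have hT : {k : Fin n | k ≠ x.val.1.1} = ↑(Finset.univ.erase x.val.1.1) := by
      ext k; simp
    rw [hT, Set.ncard_coe_finset, Finset.card_erase_of_mem (Finset.mem_univ _),
      Finset.card_univ, Fintype.card_fin]
  have himg : ((fun y : Quadricells n => y.val.1.2) '' {y | ∃ m : ℤ, (P ^ m) x = y}).ncard
      = n - 1 := by
    rw [Set.ncard_image_of_injOn (orbit_injOn hP x), hcard]
  have hEq : (fun y : Quadricells n => y.val.1.2) '' {y | ∃ m : ℤ, (P ^ m) x = y}
      = {k | k ≠ x.val.1.1} :=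
    Set.eq_of_subset_of_ncard_le hsub (by rw [himg, hTcard]) (Set.toFinite _)
  have hjT : j ∈ {k : Fin n | k ≠ x.val.1.1} := hj
  rw [← hEq] at hjT
  obtain ⟨y, ⟨m, rfl⟩, hfy⟩ := hjT
  exact ⟨m, hfy⟩

lemma fix_vertex {P τ : Equiv.Perm (Quadricells n)} (hP : IsCompleteMap P)
    (hτα : τ * mapAlpha n = mapAlpha n * τ) (hτP : τ * P = P * τ)
    {w : Quadricells n} (hw : τ w = w) :
    ∀ z : Quadricells n, z.val.1.1 = w.val.1.1 → τ z = z := by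
  intro z hz
  have hzj : z.val.1.2 ≠ w.val.1.1 := fun hc => z.2 (hz.trans hc.symm)
  obtain ⟨m, hm⟩ := orbit_snd_surj hP w z.val.1.2 hzj
  have hc : τ * P ^ m = P ^ m * τ := (Commute.zpow_right (hτP : Commute τ P) m)
  have hτy : τ ((P ^ m) w) = (P ^ m) w := by
    calc τ ((P ^ m) w) = (τ * P ^ m) w := rfl
      _ = (P ^ m * τ) w := by rw [hc]
      _ = (P ^ m) (τ w) := rfl
      _ = (P ^ m) w := by rw [hw]
  have hy1 : ((P ^ m) w).val.1.1 = w.val.1.1 := zpow_fst hP.1 m w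
  have hfst : z.val.1 = ((P ^ m) w).val.1 := Prod.ext (hz.trans hy1.symm) hm.symm
  by_cases hb : z.val.2 = ((P ^ m) w).val.2
  · have hzy : z = (P ^ m) w := Subtype.ext (Prod.ext hfst hb)
    rw [hzy]; exact hτy
  · have hza : z = mapAlpha n ((P ^ m) w) := by
      apply Subtype.ext
      rw [mapAlpha_coe]
      refine Prod.ext hfst ?_
      cases h1 : z.val.2 <;> cases h2 : ((P ^ m) w).val.2 <;> simp_all
    rw [hza]
    calc τ (mapAlpha n ((P ^ m) w)) = (τ * mapAlpha n) ((P ^ m) w) := rfl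
      _ = (mapAlpha n * τ) ((P ^ m) w) := by rw [hτα]
      _ = mapAlpha n (τ ((P ^ m) w)) := rfl
      _ = mapAlpha n ((P ^ m) w) := by rw [hτy]

lemma free {P τ : Equiv.Perm (Quadricells n)} (hP : IsCompleteMap P)
    (hτα : τ * mapAlpha n = mapAlpha n * τ) (hτβ : τ * mapBeta n = mapBeta n * τ)
    (hτP : τ * P = P * τ) {x₀ : Quadricells n} (hx : τ x₀ = x₀) : τ = 1 := by
  apply Equiv.ext
  intro z
  simp only [Equiv.Perm.coe_one, id_eq]
  by_cases hz : z.val.1.1 = x₀.val.1.1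
  · exact fix_vertex hP hτα hτP hx z hz
  · set w1 : Quadricells n := ⟨((x₀.val.1.1, z.val.1.1), true), Ne.symm hz⟩ with hw1def
    have hw1 : τ w1 = w1 := fix_vertex hP hτα hτP hx w1 rfl
    have hw2 : τ (mapBeta n w1) = mapBeta n w1 := by
      calc τ (mapBeta n w1) = (τ * mapBeta n) w1 := rfl
        _ = (mapBeta n * τ) w1 := by rw [hτβ]
        _ = mapBeta n (τ w1) := rfl
        _ = mapBeta n w1 := by rw [hw1]
    exact fix_vertex hP hτα hτP hw2 z rfl

lemma gStar_eq_one {u : Equiv.Perm (Fin n)} (hn : 2 ≤ n) (hu : gStar u = 1) : u = 1 := by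
  ext a
  obtain ⟨b, hb⟩ : ∃ b : Fin n, b ≠ a :=
    Fintype.exists_ne_of_one_lt_card (by simp only [Fintype.card_fin]; omega) a
  have hx := congrArg (fun σ : Equiv.Perm (Quadricells n) => σ ⟨((a, b), true), hb.symm⟩) hu
  simp only [Equiv.Perm.coe_one, id_eq] at hx
  have h2 : u a = a := congrArg (fun y : Quadricells n => y.val.1.1) hx
  simp [h2]

variable {n : ℕ}

noncomputable def oF (g : Equiv.Perm (Fin n)) (i : Fin n) : Finset (Fin n) :=
  Finset.image (fun k => (g ^ k) i) (Finset.range (orderOf g))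

lemma coe_oF (g : Equiv.Perm (Fin n)) (i : Fin n) :
    ↑(oF g i) = {y : Fin n | ∃ m : ℤ, (g ^ m) i = y} := by
  ext y
  simp only [oF, Finset.coe_image, Finset.coe_range, Set.mem_image, Set.mem_Iio,
    Set.mem_setOf_eq]
  constructor
  · rintro ⟨k, _, rfl⟩; exact ⟨(k : ℤ), by rw [zpow_natCast]⟩
  · rintro ⟨m, rfl⟩
    have hN : 0 < orderOf g := orderOf_pos g
    have hle : (0 : ℤ) ≤ m % (orderOf g : ℤ) := Int.emod_nonneg m (by exact_mod_cast hN.ne')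
    have hlt : m % (orderOf g : ℤ) < (orderOf g : ℤ) :=
      Int.emod_lt_of_pos m (by exact_mod_cast hN)
    refine ⟨(m % (orderOf g : ℤ)).toNat, by omega, ?_⟩
    have h1 : g ^ m = g ^ ((m % (orderOf g : ℤ)).toNat) := by
      rw [← zpow_natCast, Int.toNat_of_nonneg hle, zpow_mod_orderOf]
    rw [← h1]

lemma card_oF (g : Equiv.Perm (Fin n)) (i : Fin n) : (oF g i).card = orbLen g i := by
  rw [orbLen, ← coe_oF, Set.ncard_coe_finset]

lemma mem_oF_self (g : Equiv.Perm (Fin n)) (i : Fin n) : i ∈ oF g i := by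
  rw [← Finset.mem_coe, coe_oF]
  exact ⟨0, by simp⟩

lemma oF_eq_of_mem {g : Equiv.Perm (Fin n)} {i j : Fin n} (h : j ∈ oF g i) :
    oF g j = oF g i := by
  apply Finset.coe_injective
  rw [coe_oF, coe_oF]
  rw [← Finset.mem_coe, coe_oF] at h
  obtain ⟨a, rfl⟩ := h
  ext y
  simp only [Set.mem_setOf_eq]
  constructor
  · rintro ⟨m, rfl⟩
    exact ⟨m + a, by rw [zpow_add]; rfl⟩
  · rintro ⟨m, rfl⟩
    refine ⟨m - a, ?_⟩
    rw [← Equiv.Perm.mul_apply, ← zpow_add, show m - a + a = m by ring]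

lemma card_eq_sum_orbits (g : Equiv.Perm (Fin n)) :
    n = ∑ B ∈ Finset.image (fun i => oF g i) Finset.univ, B.card := by
  classical
  have h := Finset.card_eq_sum_card_fiberwise
    (f := fun i => oF g i) (s := Finset.univ) (t := Finset.image (fun i => oF g i) Finset.univ)
    (fun i _ => Finset.mem_image_of_mem _ (Finset.mem_univ i))
  rw [Finset.card_univ, Fintype.card_fin] at h
  refine h.trans (Finset.sum_congr rfl ?_)
  intro B hB
  congr 1
  obtain ⟨i₀, -, rfl⟩ := Finset.mem_image.1 hB
  ext i
  simp only [Finset.mem_filter, Finset.mem_univ, true_and]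
  constructor
  · intro hEq; rw [← hEq]; exact mem_oF_self g i
  · intro hmem; exact oF_eq_of_mem hmem

lemma dvd_of_orbLen_const (g : Equiv.Perm (Fin n)) (s : ℕ)
    (h : ∀ i, orbLen g i = s) : s ∣ n := by
  classical
  have hsum := card_eq_sum_orbits g
  have hc : ∀ B ∈ Finset.image (fun i => oF g i) Finset.univ, B.card = s := by
    rintro B hB
    obtain ⟨i, -, rfl⟩ := Finset.mem_image.1 hB
    rw [card_oF, h]
  rw [Finset.sum_congr rfl hc, Finset.sum_const, smul_eq_mul] at hsum
  exact ⟨_, by rw [hsum, Nat.mul_comm]⟩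

lemma dvd_sub_one_of_fixed (g : Equiv.Perm (Fin n)) (s : ℕ) (i₀ : Fin n)
    (h0 : g i₀ = i₀) (huniq : ∀ j, g j = j → j = i₀)
    (h : ∀ i, g i ≠ i → orbLen g i = s) : s ∣ n - 1 := by
  classical
  have hoF0 : oF g i₀ = {i₀} := by
    apply Finset.coe_injective
    rw [coe_oF]
    ext y
    simp only [Set.mem_setOf_eq, Finset.coe_singleton, Set.mem_singleton_iff]
    constructor
    · rintro ⟨m, rfl⟩
      exact Equiv.Perm.zpow_apply_eq_self_of_apply_eq_self h0 m
    · rintro rfl; exact ⟨0, by simp⟩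
  have hsum := card_eq_sum_orbits g
  set t := Finset.image (fun i => oF g i) Finset.univ with ht
  have h0t : oF g i₀ ∈ t := Finset.mem_image_of_mem _ (Finset.mem_univ _)
  have hsplit : ∑ B ∈ t, B.card = ∑ B ∈ t.erase (oF g i₀), B.card + (oF g i₀).card :=
    (Finset.sum_erase_add t _ h0t).symm
  have hrest : ∀ B ∈ t.erase (oF g i₀), B.card = s := by
    intro B hB
    obtain ⟨hne, hBt⟩ := Finset.mem_erase.1 hB
    obtain ⟨i, -, rfl⟩ := Finset.mem_image.1 hBt
    have hgi : g i ≠ i := by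
      intro hfix
      apply hne
      rw [huniq i hfix]
    rw [card_oF, h i hgi]
  have h2 : ∑ B ∈ t.erase (oF g i₀), B.card = (t.erase (oF g i₀)).card * s := by
    rw [Finset.sum_congr rfl hrest, Finset.sum_const, smul_eq_mul]
  have h4 : (oF g i₀).card = 1 := by rw [hoF0]; exact Finset.card_singleton _
  have h3 : n = (t.erase (oF g i₀)).card * s + 1 := by omega
  have h1 : n - 1 = (t.erase (oF g i₀)).card * s := by omega
  exact ⟨_, by rw [h1, Nat.mul_comm]⟩

end CMAux

/-- If the extended action of `g ∈ S_n` stabilizes some complete map of order `n ≥ 4`,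
then `g` has cycle type `[s^{n/s}]` or `[1, s^{(n-1)/s}]` for some positive integer `s`. -/
theorem complete_map_aut_cycle_type (n : ℕ) (hn : 4 ≤ n) (g : Equiv.Perm (Fin n))
    (h : ∃ P : Equiv.Perm (Quadricells n), IsCompleteMap P ∧ gStar g * P * (gStar g)⁻¹ = P) :
    ∃ s : ℕ, 0 < s ∧
      ((s ∣ n ∧ ∀ i : Fin n, orbLen g i = s) ∨
       (s ∣ n - 1 ∧ (∃! i : Fin n, g i = i) ∧ ∀ i : Fin n, g i ≠ i → orbLen g i = s)) := by
  classical
  obtain ⟨P, hP, hgP⟩ := h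
  have hcomm : gStar g * P = P * gStar g := by
    rwa [mul_inv_eq_iff_eq_mul] at hgP
  have key : ∀ (m : ℕ) (i j : Fin n), i ≠ j → (g ^ m) i = i → (g ^ m) j = j → g ^ m = 1 := by
    intro m i j hij hi hj
    have hτP : gStar (g ^ m) * P = P * gStar (g ^ m) := by
      rw [CMAux.gStar_pow]
      have hco : Commute (gStar g) P := hcomm
      exact hco.pow_left m
    have hfix : gStar (g ^ m) ⟨((i, j), true), hij⟩ = ⟨((i, j), true), hij⟩ :=
      Subtype.ext (by rw [CMAux.gStar_coe]; simp only; rw [hi, hj])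
    exact CMAux.gStar_eq_one (by omega)
      (CMAux.free hP (CMAux.gStar_alpha _) (CMAux.gStar_beta _) hτP hfix)
  by_cases hg1 : g = 1
  · refine ⟨1, one_pos, Or.inl ⟨one_dvd n, fun i => ?_⟩⟩
    rw [CMAux.orbLen_eq_one_iff, hg1]
    simp
  · have hNpos : 0 < orderOf g := orderOf_pos g
    have horb : ∀ i : Fin n, g i ≠ i → orbLen g i = orderOf g := by
      intro i hi
      have hl := CMAux.orbLen_dvd_orderOf g i
      have hfix2 : (g ^ orbLen g i) (g i) = g i := by
        have hc2 : g ^ orbLen g i * g = g * g ^ orbLen g i :=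
          ((Commute.refl g).pow_left (orbLen g i))
        calc (g ^ orbLen g i) (g i) = (g ^ orbLen g i * g) i := rfl
          _ = (g * g ^ orbLen g i) i := by rw [hc2]
          _ = g ((g ^ orbLen g i) i) := rfl
          _ = g i := by rw [CMAux.pow_orbLen_apply]
      have hpow1 : g ^ orbLen g i = 1 :=
        key (orbLen g i) i (g i) (fun hc => hi hc.symm) (CMAux.pow_orbLen_apply g i) hfix2
      exact Nat.dvd_antisymm hl (orderOf_dvd_of_pow_eq_one hpow1)
    by_cases hfp : ∃ i₀ : Fin n, g i₀ = i₀
    · obtain ⟨i₀, hi₀⟩ := hfp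
      have huniq : ∀ j : Fin n, g j = j → j = i₀ := by
        intro j hj
        by_contra hne
        apply hg1
        have := key 1 j i₀ hne (by simpa using hj) (by simpa using hi₀)
        simpa using this
      exact ⟨orderOf g, hNpos,
        Or.inr ⟨CMAux.dvd_sub_one_of_fixed g (orderOf g) i₀ hi₀ huniq horb,
          ⟨i₀, hi₀, huniq⟩, horb⟩⟩
    · push_neg at hfp
      exact ⟨orderOf g, hNpos,
        Or.inl ⟨CMAux.dvd_of_orbLen_const g (orderOf g) (fun i => horb i (hfp i)),
          fun i => horb i (hfp i)⟩⟩
end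

section
/- Let n ≥ 4 and let g ∈ S_n be such that every ⟨g⟩-orbit on Fin n has the same length s (so s divides n). Then there exists a non-orientable complete map P of order n such that g*∘P∘(g*)⁻¹ = P. -/
section CMAux

open Equiv Equiv.Perm Finset


variable {α : Type*}

lemma orbLen_eq_one_of_fixed (f : Perm α) {x : α} (hx : f x = x) : orbLen f x = 1 := by
  have h : {y | ∃ m : ℤ, (f ^ m) x = y} = {x} := by
    ext y
    simp only [Set.mem_setOf_eq, Set.mem_singleton_iff]
    constructor
    · rintro ⟨m, rfl⟩; exact zpow_apply_eq_self_of_apply_eq_self hx m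
    · rintro rfl; exact ⟨0, rfl⟩
  rw [orbLen, h, Set.ncard_singleton]

lemma orbLen_eq_card_support_cycleOf [Fintype α] [DecidableEq α] (f : Perm α) {x : α}
    (hx : f x ≠ x) : orbLen f x = (f.cycleOf x).support.card := by
  have h : {y | ∃ m : ℤ, (f ^ m) x = y} = ↑(f.cycleOf x).support := by
    ext y
    rw [Set.mem_setOf_eq, Finset.mem_coe, mem_support_cycleOf_iff]
    exact ⟨fun h => ⟨h, mem_support.mpr hx⟩, fun h => h.1⟩
  rw [orbLen, h, Set.ncard_coe_finset]

lemma cycle_zpow_eq_one {c : Perm α} (hc : c.IsCycle) {x : α}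
    (hx : c x ≠ x) {t : ℤ} (ht : (c ^ t) x = x) : c ^ t = 1 := by
  ext y
  by_cases hy : c y = y
  · simp [zpow_apply_eq_self_of_apply_eq_self hy t]
  · obtain ⟨k, hk⟩ := hc.sameCycle hx hy
    have h1 : (c ^ t) y = (c ^ (t + k)) x := by
      rw [zpow_add, Perm.mul_apply, hk]
    rw [h1, add_comm, zpow_add, Perm.mul_apply, ht, hk, Perm.one_apply]

lemma semiregular_zpow_eq_one {n : ℕ} (g : Perm (Fin n)) (s : ℕ)
    (hs : ∀ i : Fin n, orbLen g i = s) {t : ℤ} {x : Fin n} (hx : (g ^ t) x = x) :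
    g ^ t = 1 := by
  classical
  by_cases hgx : g x = x
  · have hs1 : s = 1 := by rw [← hs x, orbLen_eq_one_of_fixed g hgx]
    apply Equiv.ext; intro y
    rw [Perm.one_apply]
    have hgy : g y = y := by
      have h1 : orbLen g y = 1 := (hs y).trans hs1
      obtain ⟨a, ha⟩ := Set.ncard_eq_one.mp h1
      have h2 : y ∈ {z | ∃ m : ℤ, (g ^ m) y = z} := ⟨0, rfl⟩
      have h3 : g y ∈ {z | ∃ m : ℤ, (g ^ m) y = z} := ⟨1, by simp⟩
      rw [ha, Set.mem_singleton_iff] at h2 h3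
      rw [h3, h2]
    exact zpow_apply_eq_self_of_apply_eq_self hgy t
  · have hcyc := isCycle_cycleOf g hgx
    have hct : (g.cycleOf x ^ t) x = x := by
      rw [cycleOf_zpow_apply_self]; exact hx
    have h1 : g.cycleOf x ^ t = 1 :=
      cycle_zpow_eq_one hcyc (by rwa [cycleOf_apply_self]) hct
    have hdvd : (s : ℤ) ∣ t := by
      have ho : orderOf (g.cycleOf x) = s := by
        rw [hcyc.orderOf, ← orbLen_eq_card_support_cycleOf g hgx, hs]
      rw [← ho]
      exact orderOf_dvd_iff_zpow_eq_one.mpr h1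
    apply Equiv.ext; intro y
    rw [Perm.one_apply]
    by_cases hgy : g y = y
    · exact zpow_apply_eq_self_of_apply_eq_self hgy t
    · have hcy := isCycle_cycleOf g hgy
      have ho : orderOf (g.cycleOf y) = s := by
        rw [hcy.orderOf, ← orbLen_eq_card_support_cycleOf g hgy, hs]
      have h2 : g.cycleOf y ^ t = 1 := orderOf_dvd_iff_zpow_eq_one.mp (ho ▸ hdvd)
      calc (g ^ t) y = (g.cycleOf y ^ t) y := (cycleOf_zpow_apply_self g y t).symm
        _ = y := by rw [h2, Perm.one_apply]
    


def cpow {n : ℕ} (ρ : Fin n → Perm (Fin n)) (i : Fin n) (ε : Bool) : Perm (Fin n) :=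
  cond ε (ρ i)⁻¹ (ρ i)

@[simp] lemma cpow_false {n} (ρ : Fin n → Perm (Fin n)) (i) : cpow ρ i false = ρ i := rfl
@[simp] lemma cpow_true {n} (ρ : Fin n → Perm (Fin n)) (i) : cpow ρ i true = (ρ i)⁻¹ := rfl

lemma cpow_fix {n : ℕ} {ρ : Fin n → Perm (Fin n)} (h : ∀ i, ρ i i = i) (i : Fin n) (ε : Bool) :
    cpow ρ i ε i = i := by
  cases ε
  · exact h i
  · simp only [cpow_true]
    apply (ρ i).injective
    rw [← Perm.mul_apply, mul_inv_cancel, Perm.one_apply, h i]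

lemma cpow_eq_iff {n : ℕ} {ρ : Fin n → Perm (Fin n)} (h : ∀ i, ρ i i = i) (i j : Fin n)
    (ε : Bool) : cpow ρ i ε j = i ↔ j = i := by
  constructor
  · intro hj
    exact (cpow ρ i ε).injective (hj.trans (cpow_fix h i ε).symm)
  · intro hj
    rw [hj]
    exact cpow_fix h i ε

def buildPerm {n : ℕ} (ρ : Fin n → Perm (Fin n)) : Perm ((Fin n × Fin n) × Bool) where
  toFun x := ((x.1.1, cpow ρ x.1.1 x.2 x.1.2), x.2)
  invFun x := ((x.1.1, (cpow ρ x.1.1 x.2)⁻¹ x.1.2), x.2)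
  left_inv x := by obtain ⟨⟨i, j⟩, ε⟩ := x; simp
  right_inv x := by obtain ⟨⟨i, j⟩, ε⟩ := x; simp

def buildMap {n : ℕ} (ρ : Fin n → Perm (Fin n)) (h : ∀ i, ρ i i = i) :
    Perm (Quadricells n) :=
  (buildPerm ρ).subtypePerm (fun x => by
    show x.1.1 ≠ cpow ρ x.1.1 x.2 x.1.2 ↔ x.1.1 ≠ x.1.2
    have k := cpow_eq_iff h x.1.1 x.1.2 x.2
    constructor
    · intro hne hcon
      exact hne ((k.mpr hcon.symm).symm)
    · intro hne hcon
      exact hne (k.mp hcon.symm).symm)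

lemma buildMap_val {n : ℕ} (ρ : Fin n → Perm (Fin n)) (h) (x : Quadricells n) :
    (buildMap ρ h x).val = ((x.val.1.1, cpow ρ x.val.1.1 x.val.2 x.val.1.2), x.val.2) := rfl

lemma buildPerm_zpow {n : ℕ} (ρ : Fin n → Perm (Fin n)) (m : ℤ) :
    ∀ x, (buildPerm ρ ^ m) x = ((x.1.1, (cpow ρ x.1.1 x.2 ^ m) x.1.2), x.2) := by
  induction m using Int.induction_on with
  | zero => intro x; simp
  | succ k ih =>
    intro x
    have h1 : (buildPerm ρ ^ ((k:ℤ)+1)) x = (buildPerm ρ ^ (k:ℤ)) (buildPerm ρ x) := by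
      rw [zpow_add_one, Perm.mul_apply]
    rw [h1, ih]
    show ((x.1.1, (cpow ρ x.1.1 x.2 ^ (k:ℤ)) (cpow ρ x.1.1 x.2 x.1.2)), x.2) = _
    rw [← Perm.mul_apply, ← zpow_add_one]
  | pred k ih =>
    intro x
    have h1 : (buildPerm ρ ^ (-(k:ℤ)-1)) x = (buildPerm ρ ^ (-(k:ℤ))) ((buildPerm ρ)⁻¹ x) := by
      rw [zpow_sub_one, Perm.mul_apply]
    rw [h1, ih]
    show ((x.1.1, (cpow ρ x.1.1 x.2 ^ (-(k:ℤ))) ((cpow ρ x.1.1 x.2)⁻¹ x.1.2)), x.2) = _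
    rw [← Perm.mul_apply, ← zpow_sub_one]

lemma buildMap_zpow {n : ℕ} (ρ : Fin n → Perm (Fin n)) (h) (m : ℤ) (x : Quadricells n) :
    ((buildMap ρ h ^ m) x).val
      = ((x.val.1.1, (cpow ρ x.val.1.1 x.val.2 ^ m) x.val.1.2), x.val.2) := by
  rw [buildMap, subtypePerm_zpow]
  exact buildPerm_zpow ρ m x.val

lemma exists_rho (n : ℕ) (hn : 4 ≤ n) (g : Perm (Fin n)) (s : ℕ)
    (hs : ∀ i : Fin n, orbLen g i = s) :
    ∃ ρ : Fin n → Perm (Fin n), (∀ i, (ρ i).IsCycle) ∧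
      (∀ i, (ρ i).support = Finset.univ.erase i) ∧
      (∀ i, ρ (g i) = g * ρ i * g⁻¹) := by
  classical
  set base : Fin n → Perm (Fin n) := fun r => ((Finset.univ.erase r).sort (· ≤ ·)).formPerm
    with hbase
  have hlen : ∀ r : Fin n, ((Finset.univ.erase r).sort (· ≤ ·)).length = n - 1 := by
    intro r
    rw [Finset.length_sort, card_erase_of_mem (mem_univ r), card_univ, Fintype.card_fin]
  have hnd : ∀ r : Fin n, ((Finset.univ.erase r).sort (· ≤ ·)).Nodup :=
    fun r => Finset.sort_nodup _ _
  have hne1 : ∀ (r x : Fin n), (Finset.univ.erase r).sort (· ≤ ·) ≠ [x] := by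
    intro r x h
    have h2 := hlen r
    rw [h] at h2
    simp only [List.length_singleton] at h2
    omega
  have hbase_cycle : ∀ r, (base r).IsCycle := by
    intro r
    exact List.isCycle_formPerm (hnd r) (by rw [hlen]; omega)
  have hbase_supp : ∀ r, (base r).support = Finset.univ.erase r := by
    intro r
    rw [hbase]
    rw [List.support_formPerm_of_nodup _ (hnd r) (hne1 r), Finset.sort_toFinset]
  -- representatives of cycles of g
  letI sc : Setoid (Fin n) := SameCycle.setoid g
  set rep : Fin n → Fin n := fun i => (Quotient.mk sc i).out with hrepdef
  have rep_same : ∀ i, g.SameCycle (rep i) i := by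
    intro i
    have h1 : Quotient.mk sc (rep i) = Quotient.mk sc i := Quotient.out_eq _
    exact Quotient.exact h1
  have rep_g : ∀ i, rep (g i) = rep i := by
    intro i
    have h1 : g.SameCycle (g i) i := ⟨-1, by simp⟩
    have h2 : Quotient.mk sc (g i) = Quotient.mk sc i := Quotient.sound h1
    simp only [hrepdef, h2]
  have hex : ∀ i, ∃ k : ℤ, (g ^ k) (rep i) = i := fun i => rep_same i
  choose m hm using hex
  refine ⟨fun i => g ^ m i * base (rep i) * (g ^ m i)⁻¹, fun i => (hbase_cycle _).conj,
    ?_, ?_⟩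
  · intro i
    rw [support_conj, hbase_supp]
    ext x
    simp only [Finset.mem_map, mem_erase, mem_univ, and_true, toEmbedding_apply]
    constructor
    · rintro ⟨y, hy1, rfl⟩
      intro hcon
      exact hy1 ((g ^ m i).injective (hcon.trans (hm i).symm))
    · intro hx
      refine ⟨(g ^ m i)⁻¹ x, ?_, by simp⟩
      intro hcon
      apply hx
      rw [← hm i, ← hcon, ← Perm.mul_apply, mul_inv_cancel, Perm.one_apply]
  · intro i
    have hr : rep (g i) = rep i := rep_g i
    have ha : (g ^ m (g i)) (rep i) = g i := by rw [← hr]; exact hm (g i)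
    have hc : (g ^ (m i + 1)) (rep i) = g i := by
      rw [add_comm, zpow_add, zpow_one, Perm.mul_apply, hm i]
    have ht : (g ^ (m (g i) - (m i + 1))) (rep i) = rep i := by
      rw [sub_eq_neg_add, zpow_add, Perm.mul_apply, ha, zpow_neg]
      exact Perm.inv_eq_iff_eq.mpr hc.symm
    have h1 : g ^ (m (g i) - (m i + 1)) = 1 := semiregular_zpow_eq_one g s hs ht
    have h2 : g ^ m (g i) = g ^ (m i + 1) := by
      have h3 : m (g i) = m (g i) - (m i + 1) + (m i + 1) := by ring
      rw [h3, zpow_add, h1, one_mul]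
    show g ^ m (g i) * base (rep (g i)) * (g ^ m (g i))⁻¹ =
      g * (g ^ m i * base (rep i) * (g ^ m i)⁻¹) * g⁻¹
    rw [hr, h2, show m i + 1 = 1 + m i from add_comm _ _, zpow_add, zpow_one, mul_inv_rev]
    group

end CMAux

open Equiv Equiv.Perm Finset in
/-- If all `⟨g⟩`-orbits on `Fin n` have the same length `s`, `n ≥ 4`, then `g*`
stabilizes some non-orientable complete map of order `n`. -/
theorem exists_nonorientable_fixed_semiregular (n : ℕ) (hn : 4 ≤ n)
    (g : Equiv.Perm (Fin n)) (s : ℕ) (hs : ∀ i : Fin n, orbLen g i = s) :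
    ∃ P : Equiv.Perm (Quadricells n), IsCompleteMap P ∧ NonOrientable P ∧
      gStar g * P * (gStar g)⁻¹ = P := by
  classical
  obtain ⟨ρ, hcyc, hsupp, hequiv⟩ := exists_rho n hn g s hs
  have hfix : ∀ i, ρ i i = i := by
    intro i
    apply notMem_support.mp
    rw [hsupp i]
    simp
  have hcsupp : ∀ (i : Fin n) (ε : Bool), (cpow ρ i ε).support = Finset.univ.erase i := by
    intro i ε; cases ε
    · exact hsupp i
    · rw [cpow_true, Equiv.Perm.support_inv]; exact hsupp i
  have hccyc : ∀ (i : Fin n) (ε : Bool), (cpow ρ i ε).IsCycle := by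
    intro i ε; cases ε
    · exact hcyc i
    · exact (hcyc i).inv
  have hmemsupp : ∀ (i : Fin n) (ε : Bool) {j : Fin n}, j ≠ i → j ∈ (cpow ρ i ε).support := by
    intro i ε j hj
    rw [hcsupp]
    exact Finset.mem_erase.mpr ⟨hj, Finset.mem_univ j⟩
  have hcne : ∀ (i : Fin n) (ε : Bool) {j : Fin n}, j ≠ i → cpow ρ i ε j ≠ j := by
    intro i ε j hj
    exact mem_support.mp (hmemsupp i ε hj)
  have hczfix : ∀ (i : Fin n) (ε : Bool) (m : ℤ), (cpow ρ i ε ^ m) i = i :=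
    fun i ε m => zpow_apply_eq_self_of_apply_eq_self (cpow_fix hfix i ε) m
  have hczne : ∀ (i : Fin n) (ε : Bool) (m : ℤ) {j : Fin n}, j ≠ i →
      (cpow ρ i ε ^ m) j ≠ i := by
    intro i ε m j hj hcon
    exact hj ((cpow ρ i ε ^ m).injective (hcon.trans (hczfix i ε m).symm))
  refine ⟨buildMap ρ hfix, ⟨fun x => rfl, ?_, ?_, ?_⟩, ?_, ?_⟩
  · -- α P α = P⁻¹
    rw [eq_inv_iff_mul_eq_one]
    apply Equiv.ext; intro x
    apply Subtype.ext
    obtain ⟨⟨⟨i, j⟩, ε⟩, hx⟩ := x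
    show (((i, cpow ρ i (!ε) (cpow ρ i ε j)), !(!ε)) : (Fin n × Fin n) × Bool) = ((i, j), ε)
    cases ε <;> simp
  · -- P^m x ≠ α x
    intro x m hcon
    have h4 : ((buildMap ρ hfix ^ m) x).val.2 = x.val.2 := by
      rw [buildMap_zpow]
    have h5 : ((mapAlpha n) x).val.2 = !x.val.2 := rfl
    rw [hcon, h5] at h4
    exact (Bool.not_ne_self x.val.2) h4
  · -- orbit lengths
    intro x
    obtain ⟨⟨⟨i, j⟩, ε⟩, hx⟩ := x
    have hji : j ≠ i := Ne.symm hx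
    have hinj : Function.Injective (fun k : Fin n => (((i, k), ε) : (Fin n × Fin n) × Bool)) :=
      fun a b hab => congrArg (fun p : (Fin n × Fin n) × Bool => p.1.2) hab
    have hval : Subtype.val ''
          {y | ∃ m : ℤ, (buildMap ρ hfix ^ m) (⟨((i, j), ε), hx⟩ : Quadricells n) = y}
        = (fun k : Fin n => (((i, k), ε) : (Fin n × Fin n) × Bool)) '' ↑(cpow ρ i ε).support := by
      ext p
      simp only [Set.mem_image, Set.mem_setOf_eq]
      constructor
      · rintro ⟨y, ⟨m, rfl⟩, rfl⟩
        refine ⟨(cpow ρ i ε ^ m) j, ?_, ?_⟩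
        · rw [Finset.mem_coe]
          exact hmemsupp i ε (hczne i ε m hji)
        · exact (buildMap_zpow ρ hfix m ⟨((i, j), ε), hx⟩).symm
      · rintro ⟨k, hk, rfl⟩
        rw [Finset.mem_coe] at hk
        obtain ⟨m, hm⟩ := (hccyc i ε).sameCycle (hcne i ε hji) (mem_support.mp hk)
        refine ⟨(buildMap ρ hfix ^ m) ⟨((i, j), ε), hx⟩, ⟨m, rfl⟩, ?_⟩
        rw [buildMap_zpow]
        show (((i, (cpow ρ i ε ^ m) j), ε) : (Fin n × Fin n) × Bool) = ((i, k), ε)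
        rw [hm]
    have h1 : orbLen (buildMap ρ hfix) (⟨((i, j), ε), hx⟩ : Quadricells n)
        = (Subtype.val ''
          {y | ∃ m : ℤ, (buildMap ρ hfix ^ m) (⟨((i, j), ε), hx⟩ : Quadricells n) = y}).ncard :=
      (Set.ncard_image_of_injective _ Subtype.val_injective).symm
    rw [h1, hval, Set.ncard_image_of_injective _ hinj, Set.ncard_coe_finset, hcsupp,
      card_erase_of_mem (mem_univ i), card_univ, Fintype.card_fin]
  · -- NonOrientable
    intro x y
    have hmemP : buildMap ρ hfix ∈
        Subgroup.closure {mapAlpha n * mapBeta n, buildMap ρ hfix} :=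
      Subgroup.subset_closure (by simp)
    have hmemAB : mapAlpha n * mapBeta n ∈
        Subgroup.closure {mapAlpha n * mapBeta n, buildMap ρ hfix} :=
      Subgroup.subset_closure (by simp)
    set H := Subgroup.closure {mapAlpha n * mapBeta n, buildMap ρ hfix} with hH
    have htrans : ∀ {a b c : Quadricells n}, (∃ σ ∈ H, σ a = b) → (∃ σ ∈ H, σ b = c) →
        (∃ σ ∈ H, σ a = c) := by
      rintro a b c ⟨σ, hσ, rfl⟩ ⟨τ, hτ, rfl⟩
      exact ⟨τ * σ, mul_mem hτ hσ, rfl⟩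
    have hA : ∀ (i j j' : Fin n) (h : i ≠ j) (h' : i ≠ j') (ε : Bool),
        ∃ σ ∈ H, σ ⟨((i, j), ε), h⟩ = (⟨((i, j'), ε), h'⟩ : Quadricells n) := by
      intro i j j' h h' ε
      obtain ⟨m, hm⟩ := (hccyc i ε).sameCycle (hcne i ε (Ne.symm h)) (hcne i ε (Ne.symm h'))
      refine ⟨buildMap ρ hfix ^ m, zpow_mem hmemP m, ?_⟩
      apply Subtype.ext
      rw [buildMap_zpow]
      show (((i, (cpow ρ i ε ^ m) j), ε) : (Fin n × Fin n) × Bool) = ((i, j'), ε)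
      rw [hm]
    have hB : ∀ (i j : Fin n) (h : i ≠ j) (ε : Bool),
        ∃ σ ∈ H, σ ⟨((i, j), ε), h⟩ = (⟨((j, i), !ε), Ne.symm h⟩ : Quadricells n) := by
      intro i j h ε
      exact ⟨_, hmemAB, rfl⟩
    have hop : ∀ (i j : Fin n) (h : i ≠ j) (ε : Bool) (k : Fin n) (hk : k ≠ i),
        ∃ σ ∈ H, σ ⟨((i, j), ε), h⟩ = (⟨((k, i), !ε), hk⟩ : Quadricells n) :=
      fun i j h ε k hk => htrans (hA i j k h (Ne.symm hk) ε) (hB i k (Ne.symm hk) ε)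
    have fresh : ∀ u v : Fin n, ∃ a : Fin n, a ≠ u ∧ a ≠ v := by
      intro u v
      by_contra hcon
      push_neg at hcon
      have hsub : (Finset.univ : Finset (Fin n)) ⊆ {u, v} := by
        intro a _
        rcases eq_or_ne a u with h1 | h1
        · simp [h1]
        · simp [hcon a h1]
      have h2 := Finset.card_le_card hsub
      rw [card_univ, Fintype.card_fin] at h2
      have h3 : ({u, v} : Finset (Fin n)).card ≤ 2 :=
        (Finset.card_insert_le _ _).trans (by simp)
      omega
    obtain ⟨⟨⟨i, j⟩, ε⟩, hx⟩ := x
    obtain ⟨⟨⟨k, l⟩, δ⟩, hy⟩ := y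
    rcases eq_or_ne i k with rfl | hik
    · cases ε <;> cases δ
      · exact hA i j l hx hy false
      · obtain ⟨a, hai, -⟩ := fresh i i
        obtain ⟨b, hba, hbi⟩ := fresh a i
        exact htrans (hop i j hx false a hai) (htrans (hop a i hai true b hba)
          (htrans (hop b a hba false i (Ne.symm hbi)) (hA i b l (Ne.symm hbi) hy true)))
      · obtain ⟨a, hai, -⟩ := fresh i i
        obtain ⟨b, hba, hbi⟩ := fresh a i
        exact htrans (hop i j hx true a hai) (htrans (hop a i hai false b hba)
          (htrans (hop b a hba true i (Ne.symm hbi)) (hA i b l (Ne.symm hbi) hy false)))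
      · exact hA i j l hx hy true
    · cases ε <;> cases δ
      · obtain ⟨a, hai, hak⟩ := fresh i k
        exact htrans (hop i j hx false a hai) (htrans (hop a i hai true k (Ne.symm hak))
          (hA k a l (Ne.symm hak) hy false))
      · exact htrans (hop i j hx false k (Ne.symm hik)) (hA k i l (Ne.symm hik) hy true)
      · exact htrans (hop i j hx true k (Ne.symm hik)) (hA k i l (Ne.symm hik) hy false)
      · obtain ⟨a, hai, hak⟩ := fresh i k
        exact htrans (hop i j hx true a hai) (htrans (hop a i hai false k (Ne.symm hak))
          (hA k a l (Ne.symm hak) hy true))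
  · -- gStar conjugation
    rw [mul_inv_eq_iff_eq_mul]
    apply Equiv.ext; intro x
    apply Subtype.ext
    obtain ⟨⟨⟨i, j⟩, ε⟩, hx⟩ := x
    have h1 : cpow ρ (g i) ε = g * cpow ρ i ε * g⁻¹ := by
      cases ε
      · exact hequiv i
      · simp only [cpow_true, hequiv i]
        group
    show (((g i, g (cpow ρ i ε j)), ε) : (Fin n × Fin n) × Bool)
      = ((g i, cpow ρ (g i) ε (g j)), ε)
    rw [h1]
    simp [Perm.mul_apply]
end

section
/- Let n ≥ 4 and let g ∈ S_n be such that g has exactly one fixed point on Fin n and every other ⟨g⟩-orbit has the same length s (so s divides n−1). Then there exists a non-orientable complete map P of order n such that g*∘P∘(g*)⁻¹ = P. -/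
/-!
Let `i₀` be the fixed point of `g`. Since all other cycles of `g` have the same length `s`, `g`
is a power of a single cycle `c` with support `{i₀}ᶜ`: choose representatives `r_t` of the
`k = (n - 1) / s` cycles and let `c` run through the points `g^a r_t` in the order of `t + k a`,
so that `c^k = g`. Conjugating `c` by the transpositions `(i₀ i)` gives a rotation system
`ρ i = (i₀ i) c (i₀ i)` of `K_n` with `ρ (g i) = g (ρ i) g⁻¹`. Turning around the first vertex
of a quadricell along `ρ` on one side and against it on the other gives a complete map `P`
commuting with `g*`. It is non-orientable: going around a triangle `i, j, c` with `αβ` and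
powers of `P` leads from each quadricell to the one on its other side.
-/

open Equiv Equiv.Perm Function

section Orbits

variable {α β : Type*}

theorem Equiv.Perm.zpow_apply_of_semiconj {f : Perm α} {h : Perm β} {e : α → β}
    (he : ∀ x, e (f x) = h (e x)) (m : ℤ) (x : α) : e ((f ^ m) x) = (h ^ m) (e x) := by
  have he_inv : ∀ x, e (f⁻¹ x) = h⁻¹ (e x) := fun x => by
    rw [eq_inv_iff_eq, ← he, coe_inv, apply_symm_apply]
  induction m using Int.induction_on generalizing x with
  | zero => rfl
  | succ m ih => rw [zpow_add_one, zpow_add_one, mul_apply, mul_apply, ih, he]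
  | pred m ih => rw [zpow_sub_one, zpow_sub_one, mul_apply, mul_apply, ih, he_inv]

theorem orbLen_eq_of_semiconj {f : Perm α} {h : Perm β} {e : α → β} (he_inj : Injective e)
    (he : ∀ x, e (f x) = h (e x)) (x : α) : orbLen f x = orbLen h (e x) := by
  have : {y | ∃ m : ℤ, (h ^ m) (e x) = y} = e '' {y | ∃ m : ℤ, (f ^ m) x = y} := by
    ext y
    simp [← zpow_apply_of_semiconj he]
  rw [orbLen, orbLen, this, Set.ncard_image_of_injective _ he_inj]

theorem orbLen_eq_minimalPeriod_s6 [Finite α] (f : Perm α) (x : α) :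
    orbLen f x = minimalPeriod f x := by
  have horbit : {y | ∃ m : ℤ, (f ^ m) x = y} = MulAction.orbit (Subgroup.zpowers f) x := by
    ext y
    constructor
    · rintro ⟨m, rfl⟩
      exact ⟨⟨f ^ m, m, rfl⟩, rfl⟩
    · rintro ⟨⟨σ, m, rfl⟩, rfl⟩
      exact ⟨m, rfl⟩
  classical
  have := Fintype.ofFinite α
  rw [orbLen, horbit, ← Nat.card_coe_set_eq, Nat.card_eq_fintype_card,
    ← MulAction.minimalPeriod_eq_card]
  rfl

theorem Equiv.Perm.IsCycle.orbLen_eq_card_support [Fintype α] [DecidableEq α] {c : Perm α}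
    (hc : c.IsCycle) {x : α} (hx : x ∈ c.support) : orbLen c x = c.support.card := by
  have : {y | ∃ m : ℤ, (c ^ m) x = y} = c.support := by
    ext y
    exact ⟨fun hxy => (SameCycle.mem_support_iff hxy).1 hx,
      fun hy => hc.sameCycle (mem_support.1 hx) (mem_support.1 hy)⟩
  rw [orbLen, this, Set.ncard_coe_finset]

end Orbits

section CommutingCycle

theorem val_finProdFinEquiv_finRotate {m k : ℕ} (a : Fin m) (t : Fin k) :
    (finProdFinEquiv (finRotate m a, t) : ℕ) =
      ((finProdFinEquiv (a, t) : ℕ) + k) % (m * k) := by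
  obtain ⟨m, rfl⟩ : ∃ m', m = m' + 1 := ⟨m - 1, by have := a.pos; omega⟩
  simp only [finProdFinEquiv_apply_val, coe_finRotate]
  split_ifs with ha
  · subst ha
    rw [Fin.val_last, show (t : ℕ) + k * m + k = t + (m + 1) * k by ring,
      Nat.add_mod_right, Nat.mod_eq_of_lt (by nlinarith [t.2])]
    simp
  · have : (a : ℕ) < m := Fin.val_lt_last ha
    rw [Nat.mod_eq_of_lt (by nlinarith [t.2])]
    ring

-- `finProdFinEquiv (a, t) = t + k a`, so rotating `a` adds `k`, which commutes with adding `1`.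
theorem commute_finRotate_permCongr_finProdFinEquiv (m k : ℕ) :
    Commute (finRotate (m * k))
      (finProdFinEquiv.permCongr ((finRotate m).prodCongr (Equiv.refl (Fin k)))) := by
  have hrot : ∀ p : Fin (m * k), (finRotate (m * k) p : ℕ) = (p + 1) % (m * k) := fun p => by
    have := p.neZero
    rw [finRotate_apply, Fin.val_add, Fin.val_one', Nat.add_mod_mod]
  have hshift : ∀ p : Fin (m * k),
      (finProdFinEquiv.permCongr ((finRotate m).prodCongr (Equiv.refl (Fin k))) p : ℕ) =
        (p + k) % (m * k) := fun p => by
    obtain ⟨⟨a, t⟩, rfl⟩ := finProdFinEquiv.surjective p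
    simp only [permCongr_apply, symm_apply_apply, prodCongr_apply]
    exact val_finProdFinEquiv_finRotate a t
  refine Equiv.ext fun p => Fin.ext ?_
  simp only [mul_apply, hrot, hshift, Nat.mod_add_mod, add_right_comm]

variable {α : Type*} [Fintype α] [DecidableEq α] {g : Perm α} {s : ℕ}

variable (g) in
abbrev SupportOrbits : Type _ := Quotient ((SameCycle.setoid g).comap ((↑) : g.support → α))

variable (g s) in
noncomputable def supportParam (p : Fin s × SupportOrbits g) : g.support :=
  ⟨(g ^ (p.1 : ℕ)) p.2.out, pow_apply_mem_support.2 p.2.out.2⟩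

theorem supportParam_injective (hs : ∀ x ∈ g.support, minimalPeriod g x = s) :
    Injective (supportParam g s) := by
  rintro ⟨a, q⟩ ⟨b, q'⟩ h
  have hval : (g ^ (a : ℕ)) q.out = (g ^ (b : ℕ)) q'.out := congrArg Subtype.val h
  obtain rfl : q = q' := by
    rw [← Quotient.out_equiv_out]
    have h₁ : SameCycle g q.out ((g ^ (a : ℕ)) q.out) := sameCycle_pow_right.2 (.refl _ _)
    have h₂ : SameCycle g q'.out ((g ^ (b : ℕ)) q'.out) := sameCycle_pow_right.2 (.refl _ _)
    exact h₁.trans (hval ▸ h₂.symm)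
  have hper := hs _ q.out.2
  have := iterate_injOn_Iio_minimalPeriod (by rw [Set.mem_Iio, hper]; exact a.2)
    (by rw [Set.mem_Iio, hper]; exact b.2) (by simpa only [coe_pow] using hval)
  rw [Fin.ext this]

theorem supportParam_surjective (hs : ∀ x ∈ g.support, minimalPeriod g x = s) :
    Surjective (supportParam g s) := by
  intro x
  set q : SupportOrbits g := Quotient.mk _ x
  have hx : SameCycle g q.out x := Quotient.mk_out (s := (SameCycle.setoid g).comap _) x
  obtain ⟨m, hm⟩ := hx.exists_nat_pow_eq
  have hper := hs _ q.out.2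
  have hs0 : 0 < s := hper ▸ minimalPeriod_pos_of_mem_periodicPts (g.injective.mem_periodicPts _)
  refine ⟨(⟨m % s, Nat.mod_lt _ hs0⟩, q), Subtype.ext ?_⟩
  change (g ^ (m % s)) (q.out : α) = x
  rw [← hm, coe_pow, coe_pow, ← hper, iterate_mod_minimalPeriod_eq]

theorem supportParam_finRotate (hs : ∀ x ∈ g.support, minimalPeriod g x = s)
    (a : Fin s) (q : SupportOrbits g) :
    (supportParam g s (finRotate s a, q) : α) = g (supportParam g s (a, q)) := by
  obtain ⟨s, rfl⟩ : ∃ s', s = s' + 1 := ⟨s - 1, by have := a.pos; omega⟩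
  simp only [supportParam, coe_finRotate, ← mul_apply, ← pow_succ']
  split_ifs with ha
  · rw [ha, Fin.val_last, pow_zero, one_apply, coe_pow, ← hs _ q.out.2, iterate_minimalPeriod]
  · rfl

theorem exists_isCycle_commute_of_minimalPeriod_eq (hg : g ≠ 1)
    (hs : ∀ x ∈ g.support, minimalPeriod g x = s) :
    ∃ c : Perm α, c.IsCycle ∧ c.support = g.support ∧ Commute c g := by
  set k := Nat.card (SupportOrbits g)
  let e : Fin (s * k) ≃ g.support := finProdFinEquiv.symm.trans
    (((Equiv.refl _).prodCongr (Finite.equivFin _).symm).trans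
      (Equiv.ofBijective _ ⟨supportParam_injective hs, supportParam_surjective hs⟩))
  let shift := finProdFinEquiv.permCongr ((finRotate s).prodCongr (Equiv.refl (Fin k)))
  have he : ∀ p, (e (shift p) : α) = g (e p) := fun p => by
    simp only [e, shift, permCongr_apply, trans_apply, symm_apply_apply, prodCongr_apply]
    exact supportParam_finRotate hs _ _
  have hshift : shift.extendDomain e = g := by
    ext x
    by_cases hx : x ∈ g.support
    · rw [extendDomain_apply_subtype _ _ hx, he, apply_symm_apply]
    · rw [extendDomain_apply_not_subtype _ _ hx, notMem_support.1 hx]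
  have hcard : 2 ≤ s * k := by
    have := Fintype.card_congr e
    simp only [Fintype.card_fin, Fintype.card_coe] at this
    exact this ▸ two_le_card_support_of_ne_one hg
  refine ⟨(finRotate (s * k)).extendDomain e, (isCycle_finRotate_of_le hcard).extendDomain e,
    ?_, ?_⟩
  · ext x
    simp only [support_extend_domain, support_finRotate_of_le hcard, Finset.mem_map,
      Finset.mem_univ, true_and, asEmbedding_apply]
    exact ⟨by rintro ⟨p, rfl⟩; exact (e p).2, fun hx => ⟨e.symm ⟨x, hx⟩, by simp⟩⟩
  · have hc := (commute_finRotate_permCongr_finProdFinEquiv s k).map (extendDomainHom e)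
    rwa [extendDomainHom_apply, extendDomainHom_apply, hshift] at hc

end CommutingCycle

section RotationSystem

variable {α : Type*} [DecidableEq α]

theorem semiconjBy_swap_conj {g c : Perm α} {i₀ : α} (hg : g i₀ = i₀) (hgc : Commute g c)
    (i : α) :
    SemiconjBy g (swap i₀ i * c * swap i₀ i) (swap i₀ (g i) * c * swap i₀ (g i)) := by
  have hswap : SemiconjBy g (swap i₀ i) (swap i₀ (g i)) := by
    rw [SemiconjBy, mul_swap_eq_swap_mul, hg]
  exact (hswap.mul_right hgc).mul_right hswap

variable [Fintype α]

-- `ρ i` is the cyclic order of the neighbours of `i` in the complete graph on `α`.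
def IsRotationSystem (ρ : α → Perm α) : Prop :=
  ∀ i, (ρ i).IsCycle ∧ (ρ i).support = {i}ᶜ

theorem isRotationSystem_swap_conj {c : Perm α} {i₀ : α} (hc : c.IsCycle)
    (hsupp : c.support = {i₀}ᶜ) : IsRotationSystem fun i => swap i₀ i * c * swap i₀ i := by
  intro i
  have hcyc := hc.conj (g := swap i₀ i)
  have hconj := support_conj (σ := swap i₀ i) (τ := c)
  rw [swap_inv] at hcyc hconj
  refine ⟨hcyc, ?_⟩
  ext x
  simp [hconj, hsupp, Finset.mem_map_equiv, swap_apply_eq_iff]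

end RotationSystem

section RotationMap

variable {n : ℕ} {ρ : Fin n → Perm (Fin n)}

variable (ρ) in
def rotationAt (i : Fin n) (ε : Bool) : Perm (Fin n) := cond ε (ρ i) (ρ i)⁻¹

theorem rotationAt_not (i : Fin n) (ε : Bool) :
    rotationAt ρ i (!ε) = (rotationAt ρ i ε)⁻¹ := by
  cases ε <;> simp [rotationAt]

theorem IsRotationSystem.isCycle_rotationAt (hρ : IsRotationSystem ρ) (i : Fin n) (ε : Bool) :
    (rotationAt ρ i ε).IsCycle := by
  cases ε
  exacts [(hρ i).1.inv, (hρ i).1]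

theorem IsRotationSystem.support_rotationAt (hρ : IsRotationSystem ρ) (i : Fin n) (ε : Bool) :
    (rotationAt ρ i ε).support = {i}ᶜ := by
  cases ε
  exacts [(Perm.support_inv _).trans (hρ i).2, (hρ i).2]

theorem IsRotationSystem.rotationAt_self (hρ : IsRotationSystem ρ) (i : Fin n) (ε : Bool) :
    rotationAt ρ i ε i = i :=
  notMem_support.1 (by simp [hρ.support_rotationAt])

variable (ρ) in
def quadricellRotation : Perm ((Fin n × Fin n) × Bool) where
  toFun x := ((x.1.1, rotationAt ρ x.1.1 x.2 x.1.2), x.2)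
  invFun x := ((x.1.1, rotationAt ρ x.1.1 (!x.2) x.1.2), x.2)
  left_inv x := by simp [rotationAt_not]
  right_inv x := by simp [rotationAt_not]

def rotationMap (hρ : IsRotationSystem ρ) : Perm (Quadricells n) :=
  (quadricellRotation ρ).subtypePerm fun x => by
    change x.1.1 ≠ rotationAt ρ x.1.1 x.2 x.1.2 ↔ x.1.1 ≠ x.1.2
    rw [ne_comm, Ne, (rotationAt ρ _ _).injective.eq_iff' (hρ.rotationAt_self _ _), ne_comm]

theorem rotationMap_zpow_apply (hρ : IsRotationSystem ρ) (m : ℤ) {i j : Fin n} (h : i ≠ j)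
    (ε : Bool) : ((rotationMap hρ ^ m) ⟨((i, j), ε), h⟩ : (Fin n × Fin n) × Bool) =
      ((i, (rotationAt ρ i ε ^ m) j), ε) := by
  rw [zpow_apply_of_semiconj (e := Subtype.val) (h := quadricellRotation ρ) (fun _ => rfl)]
  exact (zpow_apply_of_semiconj (e := fun j => ((i, j), ε)) (f := rotationAt ρ i ε)
    (fun _ => rfl) m j).symm

theorem isCompleteMap_rotationMap (hρ : IsRotationSystem ρ) :
    IsCompleteMap (rotationMap hρ) := by
  refine ⟨fun x => rfl, ?_, ?_, ?_⟩
  · refine Equiv.ext fun ⟨⟨⟨i, j⟩, ε⟩, h⟩ => Subtype.ext ?_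
    cases ε <;> rfl
  · rintro ⟨⟨⟨i, j⟩, ε⟩, h⟩ m hm
    have := congrArg (fun y : Quadricells n => y.1.2) hm
    simp [rotationMap_zpow_apply, mapAlpha, boolNeg] at this
  · rintro ⟨⟨⟨i, j⟩, ε⟩, h⟩
    rw [orbLen_eq_of_semiconj Subtype.val_injective (h := quadricellRotation ρ) (fun _ => rfl),
      ← orbLen_eq_of_semiconj (e := fun j => ((i, j), ε)) (f := rotationAt ρ i ε)
        (fun _ _ h => by simpa using h) (fun _ => rfl),
      (hρ.isCycle_rotationAt i ε).orbLen_eq_card_support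
        (by simp [hρ.support_rotationAt, h.symm]),
      hρ.support_rotationAt, Finset.card_compl, Finset.card_singleton, Fintype.card_fin]

theorem gStar_mul_rotationMap_mul_inv (hρ : IsRotationSystem ρ) {g : Perm (Fin n)}
    (hg : ∀ i, SemiconjBy g (ρ i) (ρ (g i))) :
    gStar g * rotationMap hρ * (gStar g)⁻¹ = rotationMap hρ := by
  rw [mul_inv_eq_iff_eq_mul]
  refine Equiv.ext fun ⟨⟨⟨i, j⟩, ε⟩, h⟩ => Subtype.ext ?_
  have : SemiconjBy g (rotationAt ρ i ε) (rotationAt ρ (g i) ε) := by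
    cases ε
    exacts [(hg i).inv_right, hg i]
  change ((g i, g (rotationAt ρ i ε j)), ε) = ((g i, rotationAt ρ (g i) ε (g j)), ε)
  rw [← mul_apply, this.eq, mul_apply]

end RotationMap

section NonOrientable

open MulAction

variable {n : ℕ} {ρ : Fin n → Perm (Fin n)} (hρ : IsRotationSystem ρ)
  {H : Subgroup (Perm (Quadricells n))}

theorem orbit_eq_of_rotationMap_mem (hP : rotationMap hρ ∈ H) {i j j' : Fin n} (hj : i ≠ j)
    (hj' : i ≠ j') (ε : Bool) :
    orbit H (⟨((i, j), ε), hj⟩ : Quadricells n) = orbit H ⟨((i, j'), ε), hj'⟩ := by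
  obtain ⟨m, hm⟩ := (hρ.isCycle_rotationAt i ε).exists_zpow_eq (x := j) (y := j')
    (Perm.mem_support.1 (by simp [hρ.support_rotationAt, hj.symm]))
    (Perm.mem_support.1 (by simp [hρ.support_rotationAt, hj'.symm]))
  rw [← orbit_smul (⟨_, H.zpow_mem hP m⟩ : H)]
  congr 1
  exact Subtype.ext ((rotationMap_zpow_apply hρ m hj ε).trans (by rw [hm]))

theorem orbit_eq_of_alpha_mul_beta_mem (hαβ : mapAlpha n * mapBeta n ∈ H) {i j : Fin n}
    (h : i ≠ j) (ε : Bool) :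
    orbit H (⟨((i, j), ε), h⟩ : Quadricells n) = orbit H ⟨((j, i), !ε), h.symm⟩ :=
  (orbit_smul (⟨_, hαβ⟩ : H) _).symm

theorem orbit_eq_orbit_not (hP : rotationMap hρ ∈ H) (hαβ : mapAlpha n * mapBeta n ∈ H)
    (hn : 3 ≤ n) {i j : Fin n} (h : i ≠ j) (ε : Bool) :
    orbit H (⟨((i, j), ε), h⟩ : Quadricells n) = orbit H ⟨((i, j), !ε), h⟩ := by
  obtain ⟨c, hci, hcj⟩ := Fin.exists_ne_and_ne_of_two_lt i j (by omega)
  calc orbit H (⟨((i, j), ε), h⟩ : Quadricells n)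
      _ = orbit H (⟨((j, i), !ε), h.symm⟩ : Quadricells n) :=
        orbit_eq_of_alpha_mul_beta_mem hαβ h ε
      _ = orbit H (⟨((j, c), !ε), hcj.symm⟩ : Quadricells n) :=
        orbit_eq_of_rotationMap_mem hρ hP h.symm hcj.symm _
      _ = orbit H (⟨((c, j), !!ε), hcj⟩ : Quadricells n) :=
        orbit_eq_of_alpha_mul_beta_mem hαβ hcj.symm _
      _ = orbit H (⟨((c, i), !!ε), hci⟩ : Quadricells n) :=
        orbit_eq_of_rotationMap_mem hρ hP hcj hci _
      _ = orbit H (⟨((i, c), !!!ε), hci.symm⟩ : Quadricells n) :=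
        orbit_eq_of_alpha_mul_beta_mem hαβ hci _
      _ = orbit H (⟨((i, j), !!!ε), h⟩ : Quadricells n) :=
        orbit_eq_of_rotationMap_mem hρ hP hci.symm h _
      _ = orbit H ⟨((i, j), !ε), h⟩ := by rw [Bool.not_not]

theorem orbit_eq_of_fst_eq (hP : rotationMap hρ ∈ H) (hαβ : mapAlpha n * mapBeta n ∈ H)
    (hn : 3 ≤ n) {x y : Quadricells n} (hxy : x.1.1.1 = y.1.1.1) :
    orbit H x = orbit H y := by
  obtain ⟨⟨⟨i, j⟩, ε⟩, h⟩ := x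
  obtain ⟨⟨⟨i', j'⟩, ε'⟩, h'⟩ := y
  obtain rfl : i = i' := hxy
  rw [orbit_eq_of_rotationMap_mem hρ hP h h' ε]
  obtain rfl | rfl := Bool.eq_or_eq_not ε' ε
  · rfl
  · exact orbit_eq_orbit_not hρ hP hαβ hn h' ε

theorem nonOrientable_rotationMap (hn : 3 ≤ n) : NonOrientable (rotationMap hρ) := by
  set H := Subgroup.closure {mapAlpha n * mapBeta n, rotationMap hρ}
  have hαβ : mapAlpha n * mapBeta n ∈ H := Subgroup.subset_closure (Set.mem_insert _ _)
  have hP : rotationMap hρ ∈ H := Subgroup.subset_closure (Set.mem_insert_of_mem _ rfl)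
  suffices horbit : ∀ x y, orbit H x = orbit H y by
    intro x y
    obtain ⟨σ, hσ⟩ : y ∈ orbit H x := horbit x y ▸ mem_orbit_self y
    exact ⟨σ, σ.2, hσ⟩
  rintro ⟨⟨⟨i, j⟩, ε⟩, h⟩ y
  by_cases hi : i = y.1.1.1
  · exact orbit_eq_of_fst_eq hρ hP hαβ hn hi
  · calc orbit H ⟨((i, j), ε), h⟩
        _ = orbit H ⟨((i, y.1.1.1), ε), hi⟩ := orbit_eq_of_fst_eq hρ hP hαβ hn rfl
        _ = orbit H ⟨((y.1.1.1, i), !ε), Ne.symm hi⟩ :=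
          orbit_eq_of_alpha_mul_beta_mem hαβ hi ε
        _ = orbit H y := orbit_eq_of_fst_eq hρ hP hαβ hn rfl

end NonOrientable

/-- If `g` has exactly one fixed point and all other `⟨g⟩`-orbits have the same length
`s`, `n ≥ 4`, then `g*` stabilizes some non-orientable complete map of order `n`. -/
theorem exists_nonorientable_fixed_one_fixed_point (n : ℕ) (hn : 4 ≤ n)
    (g : Equiv.Perm (Fin n)) (s : ℕ) (hfix : ∃! i : Fin n, g i = i)
    (hs : ∀ i : Fin n, g i ≠ i → orbLen g i = s) :
    ∃ P : Equiv.Perm (Quadricells n), IsCompleteMap P ∧ NonOrientable P ∧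
      gStar g * P * (gStar g)⁻¹ = P := by
  obtain ⟨i₀, hi₀, huniq⟩ := hfix
  have hsupp : g.support = {i₀}ᶜ := by
    ext j
    simp only [Perm.mem_support, Finset.mem_compl, Finset.mem_singleton]
    exact ⟨fun hj hji₀ => hj (hji₀ ▸ hi₀), fun hj hgj => hj (huniq j hgj)⟩
  have hg : g ≠ 1 := by
    obtain ⟨j, hj, -⟩ := Fin.exists_ne_and_ne_of_two_lt i₀ i₀ (by omega)
    rintro rfl
    simpa [hj] using congrArg (j ∈ ·) hsupp
  have hper : ∀ x ∈ g.support, minimalPeriod g x = s := fun x hx =>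
    orbLen_eq_minimalPeriod_s6 g x ▸ hs x (Perm.mem_support.1 hx)
  obtain ⟨c, hc, hcsupp, hcomm⟩ := exists_isCycle_commute_of_minimalPeriod_eq hg hper
  have hρ := isRotationSystem_swap_conj hc (hcsupp.trans hsupp)
  exact ⟨rotationMap hρ, isCompleteMap_rotationMap hρ, nonOrientable_rotationMap hρ (by omega),
    gStar_mul_rotationMap_mul_inv hρ (semiconjBy_swap_conj hi₀ hcomm.symm)⟩
end

section
/- Let n ≥ 4 and let g ∈ S_n be such that either every ⟨g⟩-orbit on Fin n has the same even length 2s for some positive integer s (so 2s divides n), or n = 4 and g has exactly two fixed points and one orbit of length 2. Then there exists a non-orientable complete map P of order n such that (g*∘α)∘P∘(g*∘α)⁻¹ = P. -/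
namespace CMaux

variable {n : ℕ}

lemma mapAlpha_apply (x : Quadricells n) :
    (mapAlpha n x).val = ((x.val.1.1, x.val.1.2), !x.val.2) := rfl

lemma mapBeta_apply (x : Quadricells n) :
    (mapBeta n x).val = ((x.val.1.2, x.val.1.1), x.val.2) := rfl

lemma gStar_apply {g : Equiv.Perm (Fin n)} (x : Quadricells n) :
    (gStar g x).val = ((g x.val.1.1, g x.val.1.2), x.val.2) := rfl

/-- the local permutation used at a quadricell with boolean `ε`. -/
def pσ (σ : Fin n → Equiv.Perm (Fin n)) (ε : Bool) (i : Fin n) : Equiv.Perm (Fin n) :=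
  if ε then (σ i)⁻¹ else σ i

lemma pσ_not (σ : Fin n → Equiv.Perm (Fin n)) (ε : Bool) (i : Fin n) :
    pσ σ (!ε) i = (pσ σ ε i)⁻¹ := by cases ε <;> simp [pσ]

lemma pσ_fix {σ : Fin n → Equiv.Perm (Fin n)} (hfix : ∀ i, σ i i = i) (ε : Bool) (i : Fin n) :
    pσ σ ε i i = i := by
  cases ε
  · simpa [pσ] using hfix i
  · simp only [pσ, if_pos]
    exact (Equiv.Perm.eq_inv_iff_eq.2 (hfix i)).symm

lemma pσ_zpow_fix {σ : Fin n → Equiv.Perm (Fin n)} (hfix : ∀ i, σ i i = i) (ε : Bool)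
    (i : Fin n) (m : ℤ) : ((pσ σ ε i) ^ m) i = i :=
  Equiv.Perm.zpow_apply_eq_self_of_apply_eq_self (pσ_fix hfix ε i) m

lemma pσ_zpow_ne {σ : Fin n → Equiv.Perm (Fin n)} (hfix : ∀ i, σ i i = i) (ε : Bool)
    {i j : Fin n} (m : ℤ) (h : i ≠ j) : i ≠ ((pσ σ ε i) ^ m) j := by
  intro hc
  exact h (((pσ σ ε i) ^ m).injective (by rw [pσ_zpow_fix hfix, ← hc]))

lemma pσ_ne {σ : Fin n → Equiv.Perm (Fin n)} (hfix : ∀ i, σ i i = i) (ε : Bool) {i j : Fin n}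
    (h : i ≠ j) : i ≠ pσ σ ε i j := by
  simpa using pσ_zpow_ne hfix ε 1 h

/-- The complete map built from a family of local rotations. -/
def Pmap (σ : Fin n → Equiv.Perm (Fin n)) (hfix : ∀ i, σ i i = i) :
    Equiv.Perm (Quadricells n) where
  toFun x := ⟨((x.val.1.1, pσ σ x.val.2 x.val.1.1 x.val.1.2), x.val.2), pσ_ne hfix _ x.prop⟩
  invFun x := ⟨((x.val.1.1, pσ σ (!x.val.2) x.val.1.1 x.val.1.2), x.val.2), pσ_ne hfix _ x.prop⟩
  left_inv x := by
    ext <;> simp [pσ_not]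
  right_inv x := by
    ext <;> simp [pσ_not]

lemma Pmap_apply {σ : Fin n → Equiv.Perm (Fin n)} (hfix : ∀ i, σ i i = i) (x : Quadricells n) :
    (Pmap σ hfix x).val = ((x.val.1.1, pσ σ x.val.2 x.val.1.1 x.val.1.2), x.val.2) := rfl

lemma Pmap_inv_apply {σ : Fin n → Equiv.Perm (Fin n)} (hfix : ∀ i, σ i i = i)
    (x : Quadricells n) :
    ((Pmap σ hfix)⁻¹ x).val = ((x.val.1.1, (pσ σ x.val.2 x.val.1.1)⁻¹ x.val.1.2), x.val.2) := by
  show ((Pmap σ hfix).symm x).val = _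
  rw [← pσ_not]
  rfl

lemma Pmap_zpow {σ : Fin n → Equiv.Perm (Fin n)} (hfix : ∀ i, σ i i = i) (m : ℤ)
    (x : Quadricells n) :
    (((Pmap σ hfix) ^ m) x).val
      = ((x.val.1.1, ((pσ σ x.val.2 x.val.1.1) ^ m) x.val.1.2), x.val.2) := by
  induction m using Int.induction_on with
  | zero => simp
  | succ k ih =>
      have h1 : ∀ {G : Type} [Group G] (c : G), c ^ ((k : ℤ) + 1) = c * c ^ (k : ℤ) :=
        fun c => by rw [zpow_add_one]; exact ((Commute.refl c).zpow_right (k : ℤ)).eq.symm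
      rw [h1, h1, Equiv.Perm.mul_apply, Equiv.Perm.mul_apply, Pmap_apply, ih]
  | pred k ih =>
      have h1 : ∀ {G : Type} [Group G] (c : G), c ^ (-(k : ℤ) - 1) = c⁻¹ * c ^ (-(k : ℤ)) :=
        fun c => by
          rw [zpow_sub_one]
          exact (((Commute.refl c).zpow_right (-(k : ℤ))).inv_left).eq.symm
      rw [h1, h1, Equiv.Perm.mul_apply, Equiv.Perm.mul_apply, Pmap_inv_apply, ih]

end CMaux

namespace CMaux

variable {n : ℕ}

lemma quad_ext {x y : Quadricells n} (h : x.val = y.val) : x = y := Subtype.ext h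

lemma Pmap_alpha {σ : Fin n → Equiv.Perm (Fin n)} (hfix : ∀ i, σ i i = i) :
    mapAlpha n * Pmap σ hfix * mapAlpha n = (Pmap σ hfix)⁻¹ := by
  apply Equiv.ext
  intro x
  apply quad_ext
  show ((mapAlpha n) ((Pmap σ hfix) ((mapAlpha n) x))).val = _
  rw [Pmap_inv_apply hfix]
  simp [mapAlpha_apply, Pmap_apply, Pmap_inv_apply hfix, pσ_not]

lemma Pmap_conj {g : Equiv.Perm (Fin n)} {σ : Fin n → Equiv.Perm (Fin n)}
    (hfix : ∀ i, σ i i = i) (hequiv : ∀ i, σ (g i) = g * (σ i)⁻¹ * g⁻¹) :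
    (gStar g * mapAlpha n) * Pmap σ hfix * (gStar g * mapAlpha n)⁻¹ = Pmap σ hfix := by
  have hcomm : (gStar g * mapAlpha n) * Pmap σ hfix = Pmap σ hfix * (gStar g * mapAlpha n) := by
    apply Equiv.ext
    intro x
    apply quad_ext
    show ((gStar g) ((mapAlpha n) ((Pmap σ hfix) x))).val
        = ((Pmap σ hfix) ((gStar g) ((mapAlpha n) x))).val
    simp only [mapAlpha_apply, Pmap_apply, gStar_apply]
    refine Prod.ext (Prod.ext rfl ?_) rfl
    show g (pσ σ x.val.2 x.val.1.1 x.val.1.2) = pσ σ (!x.val.2) (g x.val.1.1) (g x.val.1.2)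
    have h2 : σ (g x.val.1.1) = g * (σ x.val.1.1)⁻¹ * g⁻¹ := hequiv _
    cases hb : x.val.2 <;>
      simp [pσ, h2, Equiv.Perm.mul_apply]
  rw [hcomm, mul_assoc, mul_inv_cancel, mul_one]

/-- `Pmap` preserves the vertex and the boolean, in all integer powers. -/
lemma Pmap_zpow_fst {σ : Fin n → Equiv.Perm (Fin n)} (hfix : ∀ i, σ i i = i) (m : ℤ)
    (x : Quadricells n) : (((Pmap σ hfix) ^ m) x).val.1.1 = x.val.1.1 := by
  rw [Pmap_zpow]

lemma Pmap_zpow_snd {σ : Fin n → Equiv.Perm (Fin n)} (hfix : ∀ i, σ i i = i) (m : ℤ)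
    (x : Quadricells n) : (((Pmap σ hfix) ^ m) x).val.2 = x.val.2 := by
  rw [Pmap_zpow]

lemma Pmap_no_alpha {σ : Fin n → Equiv.Perm (Fin n)} (hfix : ∀ i, σ i i = i)
    (x : Quadricells n) (m : ℤ) : ((Pmap σ hfix) ^ m) x ≠ mapAlpha n x := by
  intro hc
  have h1 : (((Pmap σ hfix) ^ m) x).val.2 = x.val.2 := Pmap_zpow_snd hfix m x
  rw [hc] at h1
  have : (!x.val.2) = x.val.2 := h1
  simp at this

end CMaux

namespace CMaux

variable {n : ℕ}

/-- `c` fixes `r` and is transitive (cyclic) on the complement of `r`. -/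
def CycOn (c : Equiv.Perm (Fin n)) (r : Fin n) : Prop :=
  c r = r ∧ ∀ j k : Fin n, j ≠ r → k ≠ r → ∃ m : ℤ, (c ^ m) j = k

lemma CycOn.inv {c : Equiv.Perm (Fin n)} {r : Fin n} (h : CycOn c r) : CycOn c⁻¹ r := by
  refine ⟨by rw [Equiv.Perm.inv_eq_iff_eq, h.1], fun j k hj hk => ?_⟩
  obtain ⟨m, hm⟩ := h.2 j k hj hk
  exact ⟨-m, by rwa [inv_zpow, zpow_neg, inv_inv]⟩

lemma CycOn.conj {c : Equiv.Perm (Fin n)} {r : Fin n} (h : CycOn c r)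
    (u : Equiv.Perm (Fin n)) : CycOn (u * c * u⁻¹) (u r) := by
  constructor
  · show u (c (u⁻¹ (u r))) = u r
    rw [Equiv.Perm.coe_inv, Equiv.symm_apply_apply, h.1]
  · intro j k hj hk
    have hj' : u⁻¹ j ≠ r := fun hc => hj (by rw [← hc, Equiv.Perm.coe_inv, Equiv.apply_symm_apply])
    have hk' : u⁻¹ k ≠ r := fun hc => hk (by rw [← hc, Equiv.Perm.coe_inv, Equiv.apply_symm_apply])
    obtain ⟨m, hm⟩ := h.2 _ _ hj' hk'
    refine ⟨m, ?_⟩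
    rw [conj_zpow]
    show u ((c ^ m) (u⁻¹ j)) = k
    rw [hm, Equiv.Perm.coe_inv, Equiv.apply_symm_apply]

lemma pσ_cycOn {σ : Fin n → Equiv.Perm (Fin n)} {i : Fin n} (h : CycOn (σ i) i) (ε : Bool) :
    CycOn (pσ σ ε i) i := by
  cases ε
  · simpa [pσ] using h
  · simpa [pσ] using h.inv

end CMaux

namespace CMaux

variable {n : ℕ}

lemma Pmap_orbit {σ : Fin n → Equiv.Perm (Fin n)} (hfix : ∀ i, σ i i = i)
    (hcyc : ∀ i, CycOn (σ i) i) (x : Quadricells n) :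
    {y | ∃ m : ℤ, ((Pmap σ hfix) ^ m) x = y}
      = {y : Quadricells n | y.val.1.1 = x.val.1.1 ∧ y.val.2 = x.val.2} := by
  ext y
  constructor
  · rintro ⟨m, rfl⟩
    exact ⟨Pmap_zpow_fst hfix m x, Pmap_zpow_snd hfix m x⟩
  · rintro ⟨h1, h2⟩
    have hy : y.val.1.2 ≠ x.val.1.1 := by
      rw [← h1]; exact fun hc => y.prop hc.symm
    have hx : x.val.1.2 ≠ x.val.1.1 := fun hc => x.prop hc.symm
    obtain ⟨m, hm⟩ := (pσ_cycOn (hcyc x.val.1.1) x.val.2).2 x.val.1.2 y.val.1.2 hx hy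
    refine ⟨m, quad_ext ?_⟩
    rw [Pmap_zpow hfix m x, hm]
    exact Prod.ext (Prod.ext h1.symm rfl) h2.symm

lemma slice_card (i : Fin n) (ε : Bool) :
    Set.ncard {y : Quadricells n | y.val.1.1 = i ∧ y.val.2 = ε} = n - 1 := by
  have e : {y : Quadricells n | y.val.1.1 = i ∧ y.val.2 = ε} ≃ {k : Fin n // i ≠ k} :=
    { toFun := fun y => ⟨y.val.val.1.2, fun hc => y.val.prop (y.prop.1.trans hc)⟩
      invFun := fun k => ⟨⟨((i, k.val), ε), k.prop⟩, ⟨rfl, rfl⟩⟩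
      left_inv := fun y => by
        apply Subtype.ext
        apply quad_ext
        exact Prod.ext (Prod.ext y.prop.1.symm rfl) y.prop.2.symm
      right_inv := fun k => rfl }
  rw [← Nat.card_coe_set_eq, Nat.card_congr e, Nat.card_eq_fintype_card]
  have : Fintype.card {k : Fin n // ¬ (i = k)} = n - 1 := by
    rw [Fintype.card_subtype_compl]
    simp [Fintype.card_subtype_eq]
  simp only [ne_eq] at this ⊢
  convert this using 2

lemma Pmap_orbLen {σ : Fin n → Equiv.Perm (Fin n)} (hfix : ∀ i, σ i i = i)
    (hcyc : ∀ i, CycOn (σ i) i) (x : Quadricells n) :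
    orbLen (Pmap σ hfix) x = n - 1 := by
  rw [orbLen, Pmap_orbit hfix hcyc x, slice_card]

end CMaux

namespace CMaux

variable {n : ℕ}

lemma exists_third (hn3 : 3 ≤ n) (a i : Fin n) : ∃ c : Fin n, c ≠ a ∧ c ≠ i := by
  by_contra hcon
  push_neg at hcon
  have hsub : (Finset.univ : Finset (Fin n)) ⊆ ({a, i} : Finset (Fin n)) := by
    intro c _
    simp only [Finset.mem_insert, Finset.mem_singleton]
    by_cases hc : c = a
    · exact Or.inl hc
    · exact Or.inr (hcon c hc)
  have h1 : n ≤ ({a, i} : Finset (Fin n)).card := by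
    simpa using Finset.card_le_card hsub
  have h2 : ({a, i} : Finset (Fin n)).card ≤ 2 :=
    (Finset.card_insert_le _ _).trans (by simp)
  omega

lemma Pmap_nonorientable {σ : Fin n → Equiv.Perm (Fin n)} (hfix : ∀ i, σ i i = i)
    (hcyc : ∀ i, CycOn (σ i) i) (hn3 : 3 ≤ n) (x y : Quadricells n) :
    ∃ τ ∈ Subgroup.closure {mapAlpha n * mapBeta n, Pmap σ hfix}, τ x = y := by
  set P := Pmap σ hfix with hP
  set T := mapAlpha n * mapBeta n with hT
  set H := Subgroup.closure {T, P} with hH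
  have hTmem : T ∈ H := Subgroup.subset_closure (Set.mem_insert _ _)
  have hPmem : P ∈ H := Subgroup.subset_closure (Set.mem_insert_of_mem _ rfl)
  set S : Set (Quadricells n) := {y | ∃ τ ∈ H, τ x = y} with hS
  suffices hy : y ∈ S by exact hy
  have hSP : ∀ z ∈ S, ∀ m : ℤ, (P ^ m) z ∈ S := by
    rintro z ⟨τ, hτ, rfl⟩ m
    exact ⟨P ^ m * τ, H.mul_mem (H.zpow_mem hPmem m) hτ, rfl⟩
  have hST : ∀ z ∈ S, T z ∈ S := by
    rintro z ⟨τ, hτ, rfl⟩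
    exact ⟨T * τ, H.mul_mem hTmem hτ, rfl⟩
  have hTapp : ∀ (z : Quadricells n), (T z).val = ((z.val.1.2, z.val.1.1), !z.val.2) := by
    intro z; rfl
  -- reach any other second coordinate at the same vertex
  have hreach : ∀ z ∈ S, ∀ k : Fin n, (hk : z.val.1.1 ≠ k) →
      (⟨((z.val.1.1, k), z.val.2), hk⟩ : Quadricells n) ∈ S := by
    intro z hz k hk
    have hz2 : z.val.1.2 ≠ z.val.1.1 := fun hc => z.prop hc.symm
    obtain ⟨m, hm⟩ := (pσ_cycOn (hcyc z.val.1.1) z.val.2).2 z.val.1.2 k hz2 (Ne.symm hk)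
    have : (P ^ m) z = ⟨((z.val.1.1, k), z.val.2), hk⟩ := by
      apply quad_ext
      rw [hP, Pmap_zpow, hm]
    exact this ▸ hSP z hz m
  obtain ⟨⟨⟨i, j⟩, ε⟩, hij⟩ := x
  have hij' : i ≠ j := hij
  have hx0 : (⟨((i, j), ε), hij⟩ : Quadricells n) ∈ S := ⟨1, H.one_mem, rfl⟩
  have s1 : ∀ k : Fin n, (h : i ≠ k) → (⟨((i, k), ε), h⟩ : Quadricells n) ∈ S := by
    intro k h
    exact hreach _ hx0 k h
  have s2 : ∀ k : Fin n, (h : i ≠ k) → (⟨((k, i), !ε), Ne.symm h⟩ : Quadricells n) ∈ S := by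
    intro k h
    have := hST _ (s1 k h)
    have heq : T ⟨((i, k), ε), h⟩ = ⟨((k, i), !ε), Ne.symm h⟩ := quad_ext rfl
    rwa [heq] at this
  have s3 : ∀ k : Fin n, i ≠ k → ∀ l : Fin n, (hkl : k ≠ l) →
      (⟨((k, l), !ε), hkl⟩ : Quadricells n) ∈ S := by
    intro k hik l hkl
    exact hreach _ (s2 k hik) l hkl
  have s4 : ∀ k : Fin n, i ≠ k → ∀ l : Fin n, (hkl : k ≠ l) →
      (⟨((l, k), ε), Ne.symm hkl⟩ : Quadricells n) ∈ S := by
    intro k hik l hkl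
    have := hST _ (s3 k hik l hkl)
    have heq : T ⟨((k, l), !ε), hkl⟩ = ⟨((l, k), ε), Ne.symm hkl⟩ :=
      quad_ext (by rw [hTapp]; simp)
    rwa [heq] at this
  -- all quadricells with boolean ε
  have s6 : ∀ a b : Fin n, (hab : a ≠ b) → (⟨((a, b), ε), hab⟩ : Quadricells n) ∈ S := by
    intro a b hab
    by_cases hib : i = b
    · subst hib
      -- need ((a, i), ε), a ≠ i, i.e. hab : a ≠ i
      obtain ⟨c, hca, hci⟩ := exists_third hn3 a i
      have h1 : (⟨((a, c), ε), Ne.symm hca⟩ : Quadricells n) ∈ S :=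
        s4 c (Ne.symm hci) a hca
      exact hreach _ h1 i hab
    · exact s4 b hib a (Ne.symm hab)
  -- all quadricells with boolean !ε
  have s7 : ∀ a b : Fin n, (hab : a ≠ b) → (⟨((a, b), !ε), hab⟩ : Quadricells n) ∈ S := by
    intro a b hab
    by_cases hia : i = a
    · subst hia
      have h1 : (⟨((b, i), ε), Ne.symm hab⟩ : Quadricells n) ∈ S := s6 b i (Ne.symm hab)
      have := hST _ h1
      have heq : T ⟨((b, i), ε), Ne.symm hab⟩ = ⟨((i, b), !ε), hab⟩ := quad_ext rfl
      rwa [heq] at this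
    · exact s3 a hia b hab
  obtain ⟨⟨⟨a, b⟩, ε'⟩, hab⟩ := y
  have hab' : a ≠ b := hab
  have hcases : ε' = ε ∨ ε' = !ε := by cases ε <;> cases ε' <;> simp
  rcases hcases with rfl | rfl
  · exact s6 a b hab'
  · exact s7 a b hab'

end CMaux

namespace CMaux

variable {n : ℕ}

lemma cycOn_of_isCycle {c : Equiv.Perm (Fin n)} {r : Fin n} (hc : c.IsCycle)
    (hr : c r = r) (hmove : ∀ j, j ≠ r → c j ≠ j) : CycOn c r := by
  refine ⟨hr, fun j k hj hk => ?_⟩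
  obtain ⟨x, hx, hall⟩ := hc
  exact ((hall (hmove j hj)).symm.trans (hall (hmove k hk)) : Equiv.Perm.SameCycle c j k)

lemma exists_cyc (hn : 4 ≤ n) (r : Fin n) : ∃ c : Equiv.Perm (Fin n), CycOn c r := by
  obtain ⟨m, rfl⟩ : ∃ m, n = m + 1 := ⟨n - 1, by omega⟩
  have hm : 3 ≤ m := by omega
  set j : Fin (m + 1) := ⟨m - 1, by omega⟩ with hj
  have hj0 : j ≠ 0 := by
    intro hcon
    have := congrArg Fin.val hcon
    simp only [hj, Fin.val_zero] at this
    omega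
  have hjlast : j < Fin.last m := by
    simp only [Fin.lt_iff_val_lt_val, hj, Fin.val_last]
    omega
  have hbase : CycOn (Fin.cycleRange j) (Fin.last m) := by
    apply cycOn_of_isCycle (Fin.isCycle_cycleRange hj0)
    · exact Fin.cycleRange_of_gt hjlast
    · intro k hk
      rcases lt_trichotomy k j with hlt | heq | hgt
      · rw [Fin.cycleRange_of_lt hlt]
        intro hcon
        have h1 : (k + 1).val = k.val + 1 := Fin.val_add_one_of_lt (hlt.trans hjlast)
        have h2 := congrArg Fin.val hcon
        omega
      · rw [Fin.cycleRange_of_eq heq]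
        intro hcon
        exact hj0 (by rw [← heq, ← hcon])
      · exfalso
        apply hk
        have h1 : j.val < k.val := hgt
        have h2 : k.val < m + 1 := k.isLt
        have : k.val = m := by simp only [hj] at h1; omega
        exact Fin.ext (by simp [this, Fin.val_last])
  have := hbase.conj (Equiv.swap r (Fin.last m))
  rw [Equiv.swap_apply_right] at this
  exact ⟨_, this⟩

lemma zpow_fix_dvd {g : Equiv.Perm (Fin n)} {p : ℕ} (hp : 0 < p)
    (hg : g ^ p = 1) {i : Fin n} (hmin : Function.minimalPeriod ⇑g i = p) :
    ∀ m : ℤ, (g ^ m) i = i → ((p : ℕ) : ℤ) ∣ m := by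
  intro m hm
  have h0 : ((p : ℤ)) ≠ 0 := by exact_mod_cast hp.ne'
  have hg' : g ^ ((p : ℕ) : ℤ) = 1 := by rw [zpow_natCast, hg]
  have key : g ^ m = g ^ (m % (p : ℤ)) := by
    conv_lhs => rw [← Int.emod_add_mul_ediv m (p : ℤ)]
    rw [zpow_add, zpow_mul, hg', one_zpow, mul_one]
  have hnonneg : 0 ≤ m % (p : ℤ) := Int.emod_nonneg m h0
  have hlt : m % (p : ℤ) < p := Int.emod_lt_of_pos m (by exact_mod_cast hp)
  set r := (m % (p : ℤ)).toNat with hr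
  have hm' : (g ^ r) i = i := by
    rw [← zpow_natCast, hr, Int.toNat_of_nonneg hnonneg, ← key]
    exact hm
  have hper : Function.IsPeriodicPt ⇑g r i := by
    rw [Function.IsPeriodicPt, Function.IsFixedPt, Equiv.Perm.iterate_eq_pow]
    exact hm'
  have hdr : p ∣ r := hmin ▸ hper.minimalPeriod_dvd
  have hr' : (r : ℤ) = m % (p : ℤ) := by rw [hr, Int.toNat_of_nonneg hnonneg]
  have hrlt : r < p := by
    have : (r : ℤ) < (p : ℤ) := by rw [hr']; exact hlt
    exact_mod_cast this
  have hr0 : r = 0 := Nat.eq_zero_of_dvd_of_lt hdr hrlt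
  have : m % (p : ℤ) = 0 := by rw [← hr', hr0]; rfl
  exact Int.dvd_of_emod_eq_zero this

end CMaux

namespace CMaux

variable {n : ℕ}

lemma case1_family {g : Equiv.Perm (Fin n)} (hn : 4 ≤ n) (s : ℕ) (hs : 0 < s)
    (hmp : ∀ i : Fin n, Function.minimalPeriod ⇑g i = 2 * s) :
    ∃ σ : Fin n → Equiv.Perm (Fin n), (∀ i, σ i i = i) ∧ (∀ i, CycOn (σ i) i) ∧
      (∀ i, σ (g i) = g * (σ i)⁻¹ * g⁻¹) := by
  classical
  choose cyc hcyc using exists_cyc hn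
  have h2s : 0 < 2 * s := by omega
  have hg1 : g ^ (2 * s) = 1 := by
    apply Equiv.ext
    intro i
    have h1 : (⇑g)^[2 * s] i = i := by
      rw [← hmp i]; exact Function.iterate_minimalPeriod
    rw [Equiv.Perm.iterate_eq_pow] at h1
    simpa using h1
  have hdvd : ∀ (i : Fin n) (m : ℤ), (g ^ m) i = i → ((2 * s : ℕ) : ℤ) ∣ m :=
    fun i m hm => zpow_fix_dvd h2s hg1 (hmp i) m hm
  set rep : Fin n → Fin n := fun i =>
    Finset.min' (Finset.univ.filter fun x => g.SameCycle i x)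
      ⟨i, by simp [Equiv.Perm.SameCycle.refl]⟩ with hrepdef
  have hrep : ∀ i, g.SameCycle i (rep i) := by
    intro i
    have := Finset.min'_mem (Finset.univ.filter fun x => g.SameCycle i x)
      ⟨i, by simp [Equiv.Perm.SameCycle.refl]⟩
    exact (Finset.mem_filter.1 this).2
  have hrepg : ∀ i, rep (g i) = rep i := by
    intro i
    have hsc : g.SameCycle i (g i) := ⟨1, by simp⟩
    have hfe : (Finset.univ.filter fun x => g.SameCycle (g i) x)
        = (Finset.univ.filter fun x => g.SameCycle i x) := by
      ext x
      simp only [Finset.mem_filter, Finset.mem_univ, true_and]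
      exact ⟨hsc.trans, hsc.symm.trans⟩
    simp only [hrepdef]
    congr 1
  have hksc : ∀ i, ∃ m : ℤ, (g ^ m) (rep i) = i := fun i => (hrep i).symm
  set k : Fin n → ℤ := fun i => Classical.choose (hksc i) with hkdef
  have hk : ∀ i, (g ^ (k i)) (rep i) = i := fun i => Classical.choose_spec (hksc i)
  refine ⟨fun i => g ^ (k i) * (if Even (k i) then cyc (rep i) else (cyc (rep i))⁻¹)
      * (g ^ (k i))⁻¹, ?_, ?_, ?_⟩
  · intro i
    have hri : (g ^ (k i))⁻¹ i = rep i := by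
      apply (g ^ (k i)).injective
      rw [Equiv.Perm.coe_inv, Equiv.apply_symm_apply, hk i]
    show (g ^ (k i)) ((if Even (k i) then cyc (rep i) else (cyc (rep i))⁻¹)
        ((g ^ (k i))⁻¹ i)) = i
    rw [hri]
    by_cases hev : Even (k i)
    · rw [if_pos hev, (hcyc (rep i)).1, hk i]
    · rw [if_neg hev, (hcyc (rep i)).inv.1, hk i]
  · intro i
    beta_reduce
    by_cases hev : Even (k i)
    · rw [if_pos hev]
      have := (hcyc (rep i)).conj (g ^ (k i))
      rwa [hk i] at this
    · rw [if_neg hev]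
      have := (hcyc (rep i)).inv.conj (g ^ (k i))
      rwa [hk i] at this
  · intro i
    beta_reduce
    have hre : rep (g i) = rep i := hrepg i
    have hki1 : (g ^ (k i + 1)) (rep i) = g i := by
      rw [add_comm (k i) 1, zpow_add, zpow_one, Equiv.Perm.mul_apply, hk i]
    set d : ℤ := k (g i) - (k i + 1) with hd
    have hfixd : (g ^ d) (rep i) = rep i := by
      apply (g ^ (k i + 1)).injective
      rw [← Equiv.Perm.mul_apply, ← zpow_add, (by ring : k i + 1 + d = k (g i))]
      rw [hki1]
      have := hk (g i)
      rw [hre] at this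
      exact this
    obtain ⟨q, hq⟩ := hdvd (rep i) d hfixd
    have h2d : (2 : ℤ) ∣ d := ⟨(s : ℤ) * q, by push_cast at hq ⊢; linarith⟩
    have hgk : g ^ (k (g i)) = g ^ (k i + 1) := by
      have : k (g i) = k i + 1 + d := by rw [hd]; ring
      rw [this, zpow_add]
      have hgd : g ^ d = 1 := by
        rw [hq]
        rw [zpow_mul]
        have : g ^ ((2 * s : ℕ) : ℤ) = 1 := by rw [zpow_natCast, hg1]
        rw [this, one_zpow]
      rw [hgd, mul_one]
    have hpar : Even (k (g i)) ↔ ¬ Even (k i) := by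
      obtain ⟨t, ht⟩ := h2d
      rw [Int.even_iff, Int.even_iff]
      omega
    -- now the algebra
    rw [hre, hgk]
    by_cases hev : Even (k i)
    · rw [if_neg (by rw [hpar]; exact fun hc => hc hev), if_pos hev]
      group
    · rw [if_pos (hpar.2 hev), if_neg hev]
      group

end CMaux

namespace CMaux

lemma orbLen_eq_minimalPeriod {X : Type*} [Fintype X] [DecidableEq X]
    (P : Equiv.Perm X) (x : X) :
    orbLen P x = Function.minimalPeriod ⇑P x := by
  have hxper : x ∈ Function.periodicPts ⇑P := by
    refine Function.mk_mem_periodicPts (orderOf_pos P) ?_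
    show Function.IsPeriodicPt ⇑P (orderOf P) x
    rw [Function.IsPeriodicPt, Function.IsFixedPt, Equiv.Perm.iterate_eq_pow,
      pow_orderOf_eq_one]
    rfl
  have hppos : 0 < Function.minimalPeriod ⇑P x :=
    Function.minimalPeriod_pos_of_mem_periodicPts hxper
  have hset : {y | ∃ m : ℤ, (P ^ m) x = y}
      = (fun k => (⇑P)^[k] x) '' Set.Iio (Function.minimalPeriod ⇑P x) := by
    ext y
    constructor
    · rintro ⟨m, rfl⟩
      have hop : (0 : ℤ) < (orderOf P : ℤ) := by exact_mod_cast orderOf_pos P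
      have h1 : (P ^ m) x = (⇑P)^[(m % ((orderOf P : ℕ) : ℤ)).toNat] x := by
        rw [Equiv.Perm.iterate_eq_pow, ← zpow_natCast,
          Int.toNat_of_nonneg (Int.emod_nonneg m hop.ne'), zpow_mod_orderOf]
      rw [h1, ← Function.iterate_mod_minimalPeriod_eq]
      exact ⟨_, Nat.mod_lt _ hppos, rfl⟩
    · rintro ⟨k, _, rfl⟩
      exact ⟨(k : ℤ), by rw [zpow_natCast, ← Equiv.Perm.iterate_eq_pow]⟩
  rw [orbLen, hset, Set.ncard_image_of_injOn Function.iterate_injOn_Iio_minimalPeriod,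
    ← Finset.coe_range, Set.ncard_coe_finset, Finset.card_range]

end CMaux

namespace CMaux

variable {n : ℕ}

lemma cycOn_of_three {c : Equiv.Perm (Fin n)} {r x y z : Fin n}
    (hcover : ∀ w : Fin n, w = x ∨ w = y ∨ w = z ∨ w = r)
    (hr : c r = r) (h1 : c x = y) (h2 : c y = z) (h3 : c z = x) :
    CycOn c r := by
  refine ⟨hr, fun j k hj hk => ?_⟩
  have key : ∀ w, w ≠ r → ∃ m : ℤ, (c ^ m) x = w := by
    intro w hw
    rcases hcover w with rfl | rfl | rfl | rfl
    · exact ⟨0, rfl⟩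
    · exact ⟨1, by simp [h1]⟩
    · exact ⟨2, by
        rw [show (2 : ℤ) = 1 + 1 from rfl, zpow_add, zpow_one, Equiv.Perm.mul_apply, h1, h2]⟩
    · exact absurd rfl hw
  obtain ⟨m1, hm1⟩ := key j hj
  obtain ⟨m2, hm2⟩ := key k hk
  refine ⟨m2 - m1, ?_⟩
  rw [← hm1, ← Equiv.Perm.mul_apply, ← zpow_add, sub_add_cancel]
  exact hm2

set_option maxHeartbeats 1000000 in
lemma case2_family {g : Equiv.Perm (Fin 4)}
    (hcard : (Finset.univ.filter fun i : Fin 4 => g i = i).card = 2)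
    (hg2 : g * g = 1) :
    ∃ σ : Fin 4 → Equiv.Perm (Fin 4), (∀ i, σ i i = i) ∧ (∀ i, CycOn (σ i) i) ∧
      (∀ i, σ (g i) = g * (σ i)⁻¹ * g⁻¹) := by
  classical
  have hgg : ∀ w : Fin 4, g (g w) = w := by
    intro w
    have := congrArg (fun τ : Equiv.Perm (Fin 4) => τ w) hg2
    simpa using this
  have hginv : g⁻¹ = g := inv_eq_of_mul_eq_one_right hg2
  set F := (Finset.univ.filter fun i : Fin 4 => g i = i) with hF
  set M := (Finset.univ.filter fun i : Fin 4 => ¬ g i = i) with hM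
  have hMcard : M.card = 2 := by
    have := Finset.card_filter_add_card_filter_not
      (s := (Finset.univ : Finset (Fin 4))) (p := fun i => g i = i)
    rw [← hF, ← hM] at this
    simp only [Finset.card_univ, Fintype.card_fin] at this
    omega
  obtain ⟨c, d, hcd, hFcd⟩ := Finset.card_eq_two.1 hcard
  obtain ⟨a, b, hab, hMab⟩ := Finset.card_eq_two.1 hMcard
  have hgc : g c = c := by
    have : c ∈ F := hFcd ▸ Finset.mem_insert_self c {d}
    exact (Finset.mem_filter.1 this).2
  have hgd : g d = d := by
    have : d ∈ F := hFcd ▸ Finset.mem_insert_of_mem (Finset.mem_singleton_self d)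
    exact (Finset.mem_filter.1 this).2
  have hga' : g a ≠ a := by
    have : a ∈ M := hMab ▸ Finset.mem_insert_self a {b}
    exact (Finset.mem_filter.1 this).2
  have hgb' : g b ≠ b := by
    have : b ∈ M := hMab ▸ Finset.mem_insert_of_mem (Finset.mem_singleton_self b)
    exact (Finset.mem_filter.1 this).2
  have hga : g a = b := by
    have h1 : g a ∈ M := by
      rw [hM, Finset.mem_filter]
      exact ⟨Finset.mem_univ _, by rw [hgg a]; exact fun hc => hga' hc.symm⟩
    rw [hMab, Finset.mem_insert, Finset.mem_singleton] at h1
    rcases h1 with h1 | h1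
    · exact absurd h1 hga'
    · exact h1
  have hgb : g b = a := by rw [← hga, hgg]
  -- distinctness
  have hac : a ≠ c := fun h => hga' (h ▸ hgc)
  have had : a ≠ d := fun h => hga' (h ▸ hgd)
  have hbc : b ≠ c := fun h => hgb' (h ▸ hgc)
  have hbd : b ≠ d := fun h => hgb' (h ▸ hgd)
  -- coverage
  have hcover : ∀ w : Fin 4, w = a ∨ w = b ∨ w = c ∨ w = d := by
    intro w
    by_cases hw : g w = w
    · have : w ∈ F := by rw [hF, Finset.mem_filter]; exact ⟨Finset.mem_univ _, hw⟩
      rw [hFcd, Finset.mem_insert, Finset.mem_singleton] at this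
      tauto
    · have : w ∈ M := by rw [hM, Finset.mem_filter]; exact ⟨Finset.mem_univ _, hw⟩
      rw [hMab, Finset.mem_insert, Finset.mem_singleton] at this
      tauto
  set σc : Equiv.Perm (Fin 4) := Equiv.swap d a * Equiv.swap a b with hσc
  set σd : Equiv.Perm (Fin 4) := Equiv.swap c a * Equiv.swap a b with hσd
  set σa : Equiv.Perm (Fin 4) := Equiv.swap c b * Equiv.swap b d with hσa
  set σb : Equiv.Perm (Fin 4) := g * σa⁻¹ * g⁻¹ with hσb
  -- values of σc : a → b → d → a, fixes c
  have hσc_a : σc a = b := by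
    rw [hσc, Equiv.Perm.mul_apply, Equiv.swap_apply_left,
      Equiv.swap_apply_of_ne_of_ne hbd (Ne.symm hab)]
  have hσc_b : σc b = d := by
    rw [hσc, Equiv.Perm.mul_apply, Equiv.swap_apply_right, Equiv.swap_apply_right]
  have hσc_d : σc d = a := by
    rw [hσc, Equiv.Perm.mul_apply,
      Equiv.swap_apply_of_ne_of_ne (Ne.symm had) (Ne.symm hbd), Equiv.swap_apply_left]
  have hσc_c : σc c = c := by
    rw [hσc, Equiv.Perm.mul_apply,
      Equiv.swap_apply_of_ne_of_ne (Ne.symm hac) (Ne.symm hbc),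
      Equiv.swap_apply_of_ne_of_ne hcd (Ne.symm hac)]
  -- values of σd : c → a → b → c, fixes d
  have hσd_c : σd c = a := by
    rw [hσd, Equiv.Perm.mul_apply,
      Equiv.swap_apply_of_ne_of_ne (Ne.symm hac) (Ne.symm hbc), Equiv.swap_apply_left]
  have hσd_a : σd a = b := by
    rw [hσd, Equiv.Perm.mul_apply, Equiv.swap_apply_left,
      Equiv.swap_apply_of_ne_of_ne hbc (Ne.symm hab)]
  have hσd_b : σd b = c := by
    rw [hσd, Equiv.Perm.mul_apply, Equiv.swap_apply_right, Equiv.swap_apply_right]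
  have hσd_d : σd d = d := by
    rw [hσd, Equiv.Perm.mul_apply,
      Equiv.swap_apply_of_ne_of_ne (Ne.symm had) (Ne.symm hbd),
      Equiv.swap_apply_of_ne_of_ne hcd.symm (Ne.symm had)]
  -- values of σa : c → b → d → c, fixes a
  have hσa_c : σa c = b := by
    rw [hσa, Equiv.Perm.mul_apply,
      Equiv.swap_apply_of_ne_of_ne (Ne.symm hbc) hcd, Equiv.swap_apply_left]
  have hσa_b : σa b = d := by
    rw [hσa, Equiv.Perm.mul_apply, Equiv.swap_apply_left,
      Equiv.swap_apply_of_ne_of_ne hcd.symm (Ne.symm hbd)]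
  have hσa_d : σa d = c := by
    rw [hσa, Equiv.Perm.mul_apply, Equiv.swap_apply_right, Equiv.swap_apply_right]
  have hσa_a : σa a = a := by
    rw [hσa, Equiv.Perm.mul_apply,
      Equiv.swap_apply_of_ne_of_ne hab had,
      Equiv.swap_apply_of_ne_of_ne hac hab]
  -- σb fixes b
  have hσb_b : σb b = b := by
    rw [hσb, Equiv.Perm.mul_apply, Equiv.Perm.mul_apply, hginv, hgb]
    rw [show σa⁻¹ a = a from (Equiv.Perm.eq_inv_iff_eq.2 hσa_a).symm, hga]
  set σ : Fin 4 → Equiv.Perm (Fin 4) := fun i =>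
    if i = c then σc else if i = d then σd else if i = a then σa else σb with hσ
  have hσ_c : σ c = σc := by simp [hσ]
  have hσ_d : σ d = σd := by simp [hσ, hcd.symm]
  have hσ_a : σ a = σa := by simp [hσ, hac, had]
  have hσ_b : σ b = σb := by simp [hσ, hbc, hbd, Ne.symm hab]
  refine ⟨σ, ?_, ?_, ?_⟩
  · intro i
    rcases hcover i with rfl | rfl | rfl | rfl
    · rw [hσ_a]; exact hσa_a
    · rw [hσ_b]; exact hσb_b
    · rw [hσ_c]; exact hσc_c
    · rw [hσ_d]; exact hσd_d
  · intro i
    rcases hcover i with rfl | rfl | rfl | rfl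
    · rw [hσ_a]
      exact cycOn_of_three (fun w => by have := hcover w; tauto) hσa_a hσa_c hσa_b hσa_d
    · rw [hσ_b, hσb]
      have h1 : CycOn σa a :=
        cycOn_of_three (fun w => by have := hcover w; tauto) hσa_a hσa_c hσa_b hσa_d
      have := h1.inv.conj g
      rwa [hga] at this
    · rw [hσ_c]
      exact cycOn_of_three (fun w => by have := hcover w; tauto) hσc_c hσc_a hσc_b hσc_d
    · rw [hσ_d]
      exact cycOn_of_three (fun w => by have := hcover w; tauto) hσd_d hσd_c hσd_a hσd_b
  · intro i
    rcases hcover i with rfl | rfl | rfl | rfl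
    · rw [hga, hσ_b, hσ_a, hσb]
    · rw [hgb, hσ_a, hσ_b]
      rw [mul_inv_rev, mul_inv_rev, inv_inv, inv_inv, hginv]
      calc σa = (g * g) * σa * (g * g) := by rw [hg2]; simp
        _ = g * (g * (σa⁻¹)⁻¹ * g) * g := by rw [inv_inv]; group
    · rw [hgc, hσ_c]
      -- show σc = g * σc⁻¹ * g⁻¹
      have key : g * σc * g⁻¹ = σc⁻¹ := by
        apply Equiv.ext
        intro w
        rw [Equiv.Perm.mul_apply, Equiv.Perm.mul_apply, hginv]
        rcases hcover w with rfl | rfl | rfl | rfl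
        · rw [hga, hσc_b, hgd]; exact Equiv.Perm.eq_inv_iff_eq.2 hσc_d
        · rw [hgb, hσc_a, hgb]; exact Equiv.Perm.eq_inv_iff_eq.2 hσc_a
        · rw [hgc, hσc_c, hgc]; exact Equiv.Perm.eq_inv_iff_eq.2 hσc_c
        · rw [hgd, hσc_d, hga]; exact Equiv.Perm.eq_inv_iff_eq.2 hσc_b
      rw [← key]
      calc σc = (g * g) * σc * (g * g)⁻¹ := by rw [hg2]; simp
        _ = g * (g * σc * g⁻¹)⁻¹⁻¹ * g⁻¹ := by rw [inv_inv]; group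
    · rw [hgd, hσ_d]
      have key : g * σd * g⁻¹ = σd⁻¹ := by
        apply Equiv.ext
        intro w
        rw [Equiv.Perm.mul_apply, Equiv.Perm.mul_apply, hginv]
        rcases hcover w with rfl | rfl | rfl | rfl
        · rw [hga, hσd_b, hgc]; exact Equiv.Perm.eq_inv_iff_eq.2 hσd_c
        · rw [hgb, hσd_a, hgb]; exact Equiv.Perm.eq_inv_iff_eq.2 hσd_a
        · rw [hgc, hσd_c, hga]; exact Equiv.Perm.eq_inv_iff_eq.2 hσd_b
        · rw [hgd, hσd_d, hgd]; exact Equiv.Perm.eq_inv_iff_eq.2 hσd_d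
      rw [← key]
      calc σd = (g * g) * σd * (g * g)⁻¹ := by rw [hg2]; simp
        _ = g * (g * σd * g⁻¹)⁻¹⁻¹ * g⁻¹ := by rw [inv_inv]; group

end CMaux


/-- If all `⟨g⟩`-orbits have the same even length `2s` with `2s ∣ n`, or `n = 4` and
`g` has cycle type `[1,1,2]`, then `g* ∘ α` stabilizes some non-orientable complete
map of order `n`. -/
theorem exists_nonorientable_fixed_reversing (n : ℕ) (hn : 4 ≤ n)
    (g : Equiv.Perm (Fin n))
    (h : (∃ s : ℕ, 0 < s ∧ 2 * s ∣ n ∧ ∀ i : Fin n, orbLen g i = 2 * s) ∨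
      (n = 4 ∧ (Finset.univ.filter fun i : Fin n => g i = i).card = 2 ∧
        ∀ i : Fin n, g i ≠ i → orbLen g i = 2)) :
    ∃ P : Equiv.Perm (Quadricells n), IsCompleteMap P ∧ NonOrientable P ∧
      (gStar g * mapAlpha n) * P * (gStar g * mapAlpha n)⁻¹ = P := by
  classical
  have hσ : ∃ σ : Fin n → Equiv.Perm (Fin n), (∀ i, σ i i = i) ∧
      (∀ i, CMaux.CycOn (σ i) i) ∧ (∀ i, σ (g i) = g * (σ i)⁻¹ * g⁻¹) := by
    rcases h with ⟨s, hs, _, horb⟩ | ⟨hn4, hcard, horb⟩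
    · apply CMaux.case1_family hn s hs
      intro i
      rw [← CMaux.orbLen_eq_minimalPeriod]
      exact horb i
    · subst hn4
      apply CMaux.case2_family hcard
      have hgg : ∀ i : Fin 4, g (g i) = i := by
        intro i
        by_cases hi : g i = i
        · rw [hi, hi]
        · have h2 : Function.minimalPeriod ⇑g i = 2 := by
            rw [← CMaux.orbLen_eq_minimalPeriod]
            exact horb i hi
          have h3 := Function.iterate_minimalPeriod (f := ⇑g) (x := i)
          rw [h2] at h3
          simpa [Function.iterate_succ_apply', Function.iterate_one] using h3
      apply Equiv.ext
      intro i
      simpa using hgg i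
  obtain ⟨σ, hfix, hcyc, hequiv⟩ := hσ
  refine ⟨CMaux.Pmap σ hfix, ⟨fun x => rfl, CMaux.Pmap_alpha hfix,
    fun x m => CMaux.Pmap_no_alpha hfix x m, fun x => CMaux.Pmap_orbLen hfix hcyc x⟩,
    fun x y => CMaux.Pmap_nonorientable hfix hcyc (by omega) x y,
    CMaux.Pmap_conj hfix hequiv⟩
end
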